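/- arXiv:1908.10230 — 9 statements merged into one kernel-verified Lean document; each statement's English description precedes it below -/
import Mathlib

section
/- Let a₁₁, a₂₂ > 0 and a₁₂, a₂₁ be real numbers with a₁₂·a₂₁ ≥ 0 and d := a₁₁a₂₂ − a₁₂a₂₁ > 0. Then for every ξ ∈ ℝ with ξ ≠ 0 and every λ ∈ ℂ that is not a strictly negative real number (i.e. it is not the case that Im λ = 0 and Re λ < 0), one has det(λI − a_π(ξ)) = λ² + (a₁₁ξ⁴ + a₂₂ξ²)λ + d·ξ⁶ ≠ 0. (Parameter-ellipticity of the principal symbol in ℂ ∖ (−∞,0).) -/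
/-!
With `b = a₁₁ξ⁴ + a₂₂ξ²` and `c = dξ⁶`, the discriminant is
`b² − 4c = (a₁₁ξ⁴ − a₂₂ξ²)² + 4a₁₂a₂₁ξ⁶ ≥ 0`, so both roots of `λ² + bλ + c` are real;
since `b ≥ 0` and `c > 0`, a real root is negative.
-/

namespace Complex

lemma im_eq_zero_of_sq_add_mul_add_eq_zero {b c : ℝ} (hdisc : 4 * c ≤ b ^ 2) {z : ℂ}
    (hz : z ^ 2 + b * z + c = 0) : z.im = 0 := by
  have hre : z.re ^ 2 - z.im ^ 2 + b * z.re + c = 0 := by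
    simpa [sq] using congrArg re hz
  have him : z.im * (2 * z.re + b) = 0 := by
    have := congrArg im hz
    simp only [sq, add_im, mul_im, ofReal_re, ofReal_im, zero_im] at this
    linarith
  rcases mul_eq_zero.mp him with hy | hx
  · exact hy
  · -- on the line `re z = -b/2` the real part reads `c - b²/4 - (im z)² = 0`
    have hx' : z.re = -b / 2 := by linarith
    rw [hx'] at hre
    nlinarith [sq_nonneg z.im]

end Complex

lemma neg_of_sq_add_mul_add_eq_zero {b c x : ℝ} (hb : 0 ≤ b) (hc : 0 < c)
    (hx : x ^ 2 + b * x + c = 0) : x < 0 := by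
  by_contra! hx0
  nlinarith [sq_nonneg x, mul_nonneg hb hx0]

lemma Complex.im_eq_zero_and_re_neg_of_sq_add_mul_add_eq_zero {b c : ℝ} (hb : 0 ≤ b)
    (hc : 0 < c) (hdisc : 4 * c ≤ b ^ 2) {z : ℂ} (hz : z ^ 2 + b * z + c = 0) :
    z.im = 0 ∧ z.re < 0 := by
  have him := im_eq_zero_of_sq_add_mul_add_eq_zero hdisc hz
  refine ⟨him, neg_of_sq_add_mul_add_eq_zero hb hc ?_⟩
  simpa [sq, him] using congrArg re hz

lemma four_mul_det_mul_pow_six_le_sq {a11 a12 a21 a22 : ℝ} (hprod : 0 ≤ a12 * a21) (ξ : ℝ) :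
    4 * ((a11 * a22 - a12 * a21) * ξ ^ 6) ≤ (a11 * ξ ^ 4 + a22 * ξ ^ 2) ^ 2 := by
  have hξ6 : 0 ≤ ξ ^ 6 := Even.pow_nonneg ⟨3, rfl⟩ ξ
  nlinarith [sq_nonneg (a11 * ξ ^ 4 - a22 * ξ ^ 2), mul_nonneg hprod hξ6]

/-- Parameter-ellipticity of the principal symbol in ℂ ∖ (−∞,0): for positive
`a₁₁, a₂₂`, `a₁₂·a₂₁ ≥ 0` and positive determinant `d = a₁₁a₂₂ − a₁₂a₂₁`, the
determinant `det(λI − a_π(ξ)) = λ² + (a₁₁ξ⁴ + a₂₂ξ²)λ + d·ξ⁶` does not vanish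
for `ξ ≠ 0` and `λ` not a strictly negative real number. -/
theorem stmt_0 (a11 a12 a21 a22 : ℝ) (h11 : 0 < a11) (h22 : 0 < a22)
    (hprod : 0 ≤ a12 * a21) (hd : 0 < a11 * a22 - a12 * a21)
    (ξ : ℝ) (hξ : ξ ≠ 0) (lam : ℂ) (hlam : ¬ (lam.im = 0 ∧ lam.re < 0)) :
    lam ^ 2 + ((a11 * ξ ^ 4 + a22 * ξ ^ 2 : ℝ) : ℂ) * lam
      + (((a11 * a22 - a12 * a21) * ξ ^ 6 : ℝ) : ℂ) ≠ 0 := by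
  have hb : 0 ≤ a11 * ξ ^ 4 + a22 * ξ ^ 2 := by positivity
  have hc : 0 < (a11 * a22 - a12 * a21) * ξ ^ 6 := by positivity
  exact fun h => hlam <| Complex.im_eq_zero_and_re_neg_of_sq_add_mul_add_eq_zero hb hc
    (four_mul_det_mul_pow_six_le_sq hprod ξ) h
end

section
/- Let a₁₁, a₂₂ > 0 and a₁₂, a₂₁ be real numbers with a₁₂·a₂₁ ≥ 0 and a₁₁a₂₂ − a₁₂a₂₁ > 0, and let ξ ∈ ℝ with ξ ≠ 0. Then every complex root λ of the quadratic polynomial λ² + (a₁₁ξ⁴ + a₂₂ξ²)λ + (a₁₁a₂₂ − a₁₂a₂₁)ξ⁶ is a strictly negative real number. -/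
namespace Complex

lemma im_eq_zero_and_re_neg_of_sq_add_mul_add_eq_zero_s2 {b c : ℝ} (hb : 0 < b) (hc : 0 < c)
    (hdisc : 4 * c ≤ b ^ 2) {z : ℂ} (hz : z ^ 2 + b * z + c = 0) : z.im = 0 ∧ z.re < 0 := by
  have hy := im_eq_zero_of_sq_add_mul_add_eq_zero hdisc hz
  have hre : z.re ^ 2 + b * z.re + c = 0 := by
    simpa [sq, hy] using congrArg re hz
  exact ⟨hy, by nlinarith⟩

end Complex

/-- Under positivity of `a₁₁, a₂₂`, nonnegativity of `a₁₂·a₂₁` and positivity of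
the determinant `a₁₁a₂₂ − a₁₂a₂₁`, every complex root of the quadratic
`λ² + (a₁₁ξ⁴ + a₂₂ξ²)λ + (a₁₁a₂₂ − a₁₂a₂₁)ξ⁶` (with `ξ ≠ 0`) is a strictly
negative real number. -/
theorem stmt_2 (a11 a12 a21 a22 : ℝ) (h11 : 0 < a11) (h22 : 0 < a22)
    (hprod : 0 ≤ a12 * a21) (hd : 0 < a11 * a22 - a12 * a21)
    (ξ : ℝ) (hξ : ξ ≠ 0) (lam : ℂ)
    (hroot : lam ^ 2 + ((a11 * ξ ^ 4 + a22 * ξ ^ 2 : ℝ) : ℂ) * lam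
        + (((a11 * a22 - a12 * a21) * ξ ^ 6 : ℝ) : ℂ) = 0) :
    lam.im = 0 ∧ lam.re < 0 := by
  refine Complex.im_eq_zero_and_re_neg_of_sq_add_mul_add_eq_zero_s2 (by positivity) (by positivity)
    ?_ hroot
  have hdiscriminant : (a11 * ξ ^ 4 + a22 * ξ ^ 2) ^ 2 - 4 * ((a11 * a22 - a12 * a21) * ξ ^ 6)
      = (a11 * ξ ^ 4 - a22 * ξ ^ 2) ^ 2 + 4 * (a12 * a21) * ξ ^ 6 := by ring
  have hcoupling : 0 ≤ 4 * (a12 * a21) * ξ ^ 6 := by positivity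
  linarith [sq_nonneg (a11 * ξ ^ 4 - a22 * ξ ^ 2)]
end

section
/- Let ā₁₁, ā₁₂, ā₂₁, ā₂₂ be real numbers with ā₁₂ ≠ 0, set d := ā₁₁ā₂₂ − ā₁₂ā₂₁, and let λ ∈ ℂ with λ ≠ 0. Suppose u₁ : ℝ → ℂ is six times differentiable and u₂ : ℝ → ℂ is twice differentiable, and that they satisfy the system λu₁ + ā₁₁u₁⁽⁴⁾ − ā₁₂u₂″ = 0 and λu₂ + ā₂₁u₁⁽⁴⁾ − ā₂₂u₂″ = 0 on ℝ. Then u₂ = (1/ā₁₂)·((d/λ)u₁⁽⁴⁾ + ā₂₂u₁), and u₁ satisfies the sixth-order ordinary differential equation d·u₁⁽⁶⁾ − λā₁₁u₁⁽⁴⁾ + λā₂₂u₁″ − λ²u₁ = 0. -/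
/-!
Eliminating `u₂″` between the two equations (multiply the first by `ā₂₂`, the second by `ā₁₂`
and subtract) gives the algebraic relation `λ ā₁₂ u₂ = d u₁⁽⁴⁾ + λ ā₂₂ u₁`, which is the formula
for `u₂`. Differentiating this relation twice expresses `u₂″` through `u₁⁽⁶⁾` and `u₁″`, and
substituting that into the first equation yields the sixth-order equation for `u₁`.
-/

section

variable {𝕜 𝕜' : Type*} [NontriviallyNormedField 𝕜] [NontriviallyNormedField 𝕜']
  [NormedAlgebra 𝕜 𝕜'] {f g : 𝕜 → 𝕜'}

theorem deriv_const_mul_add_const_mul (hf : Differentiable 𝕜 f) (hg : Differentiable 𝕜 g)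
    (a b : 𝕜') :
    deriv (fun x => a * f x + b * g x) = fun x => a * deriv f x + b * deriv g x := by
  funext x
  rw [deriv_fun_add ((hf x).const_mul a) ((hg x).const_mul b), deriv_const_mul_field,
    deriv_const_mul_field]

theorem iteratedDeriv_two_const_mul_add_const_mul (hf : Differentiable 𝕜 f)
    (hf' : Differentiable 𝕜 (deriv f)) (hg : Differentiable 𝕜 g)
    (hg' : Differentiable 𝕜 (deriv g)) (a b : 𝕜') :
    iteratedDeriv 2 (fun x => a * f x + b * g x)
      = fun x => a * iteratedDeriv 2 f x + b * iteratedDeriv 2 g x := by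
  simp only [iteratedDeriv_eq_iterate, Function.iterate_succ, Function.iterate_zero,
    Function.comp_apply, id, deriv_const_mul_add_const_mul hf hg,
    deriv_const_mul_add_const_mul hf' hg']

end

theorem iteratedDeriv_iteratedDeriv {𝕜 F : Type*} [NontriviallyNormedField 𝕜]
    [NormedAddCommGroup F] [NormedSpace 𝕜 F] (m n : ℕ) (f : 𝕜 → F) :
    iteratedDeriv m (iteratedDeriv n f) = iteratedDeriv (m + n) f := by
  simp only [iteratedDeriv_eq_iterate, Function.iterate_add_apply]

theorem stmt_4_general (a11 a12 a21 a22 : ℝ) (h12 : a12 ≠ 0) (lam : ℂ) (hlam : lam ≠ 0)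
    (u1 u2 : ℝ → ℂ)
    (hu1 : ∀ k < 6, Differentiable ℝ (iteratedDeriv k u1))
    (heq1 : ∀ t : ℝ, lam * u1 t + (a11 : ℂ) * iteratedDeriv 4 u1 t
        - (a12 : ℂ) * iteratedDeriv 2 u2 t = 0)
    (heq2 : ∀ t : ℝ, lam * u2 t + (a21 : ℂ) * iteratedDeriv 4 u1 t
        - (a22 : ℂ) * iteratedDeriv 2 u2 t = 0) :
    (∀ t : ℝ, u2 t = (1 / (a12 : ℂ)) *
        ((((a11 * a22 - a12 * a21 : ℝ) : ℂ) / lam) * iteratedDeriv 4 u1 t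
          + (a22 : ℂ) * u1 t)) ∧
    (∀ t : ℝ, ((a11 * a22 - a12 * a21 : ℝ) : ℂ) * iteratedDeriv 6 u1 t
        - lam * (a11 : ℂ) * iteratedDeriv 4 u1 t
        + lam * (a22 : ℂ) * iteratedDeriv 2 u1 t - lam ^ 2 * u1 t = 0) := by
  set d : ℂ := ((a11 * a22 - a12 * a21 : ℝ) : ℂ) with hd
  have hrel : ∀ t, lam * a12 * u2 t = d * iteratedDeriv 4 u1 t + lam * a22 * u1 t := by
    intro t
    rw [hd]
    push_cast
    linear_combination (a12 : ℂ) * heq2 t - (a22 : ℂ) * heq1 t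
  have hrel'' : ∀ t, lam * a12 * iteratedDeriv 2 u2 t
      = d * iteratedDeriv 6 u1 t + lam * a22 * iteratedDeriv 2 u1 t := by
    have hd0 : Differentiable ℝ u1 := by simpa using hu1 0 (by norm_num)
    have hd1 : Differentiable ℝ (deriv u1) := by simpa using hu1 1 (by norm_num)
    have hd5 : Differentiable ℝ (deriv (iteratedDeriv 4 u1)) := by
      rw [← iteratedDeriv_succ]; exact hu1 5 (by norm_num)
    intro t
    have h := congrFun (congrArg (iteratedDeriv 2) (funext hrel)) t
    rwa [iteratedDeriv_const_mul_field, iteratedDeriv_two_const_mul_add_const_mul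
      (hu1 4 (by norm_num)) hd5 hd0 hd1, iteratedDeriv_iteratedDeriv] at h
  refine ⟨fun t => ?_, fun t => ?_⟩
  · have h12' : (a12 : ℂ) ≠ 0 := Complex.ofReal_ne_zero.mpr h12
    field_simp
    linear_combination hrel t
  · linear_combination (-lam) * heq1 t - hrel'' t

/-- Reduction of the frozen-coefficient Lopatinskij–Shapiro system to a single
sixth-order ODE: if `λu₁ + ā₁₁u₁⁽⁴⁾ − ā₁₂u₂″ = 0` and
`λu₂ + ā₂₁u₁⁽⁴⁾ − ā₂₂u₂″ = 0` with `ā₁₂ ≠ 0`, `λ ≠ 0`, then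
`u₂ = (1/ā₁₂)((d/λ)u₁⁽⁴⁾ + ā₂₂u₁)` with `d = ā₁₁ā₂₂ − ā₁₂ā₂₁`, and `u₁` solves
`d·u₁⁽⁶⁾ − λā₁₁u₁⁽⁴⁾ + λā₂₂u₁″ − λ²u₁ = 0`. -/
theorem stmt_4 (a11 a12 a21 a22 : ℝ) (h12 : a12 ≠ 0) (lam : ℂ) (hlam : lam ≠ 0)
    (u1 u2 : ℝ → ℂ)
    (hu1 : ∀ k < 6, Differentiable ℝ (iteratedDeriv k u1))
    (hu2 : ∀ k < 2, Differentiable ℝ (iteratedDeriv k u2))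
    (heq1 : ∀ t : ℝ, lam * u1 t + (a11 : ℂ) * iteratedDeriv 4 u1 t
        - (a12 : ℂ) * iteratedDeriv 2 u2 t = 0)
    (heq2 : ∀ t : ℝ, lam * u2 t + (a21 : ℂ) * iteratedDeriv 4 u1 t
        - (a22 : ℂ) * iteratedDeriv 2 u2 t = 0) :
    (∀ t : ℝ, u2 t = (1 / (a12 : ℂ)) *
        ((((a11 * a22 - a12 * a21 : ℝ) : ℂ) / lam) * iteratedDeriv 4 u1 t
          + (a22 : ℂ) * u1 t)) ∧
    (∀ t : ℝ, ((a11 * a22 - a12 * a21 : ℝ) : ℂ) * iteratedDeriv 6 u1 t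
        - lam * (a11 : ℂ) * iteratedDeriv 4 u1 t
        + lam * (a22 : ℂ) * iteratedDeriv 2 u1 t - lam ^ 2 * u1 t = 0) :=
  stmt_4_general a11 a12 a21 a22 h12 lam hlam u1 u2 hu1 heq1 heq2
end

section
/- Let d, a₁₁, a₂₂ be strictly positive real numbers and let λ ∈ ℂ satisfy Re λ ≥ 0 and λ ≠ 0. Then for every real number z ≤ 0, one has d·z³ − λa₁₁z² + λa₂₂z − λ² ≠ 0 (as a complex number). Equivalently, every real root of the cubic p(z) = d·z³ − λa₁₁z² + λa₂₂z − λ² is strictly positive. -/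
/-!
For `z ≤ 0` put `c = a₁₁z² − a₂₂z ≥ 0` and `m = −dz³ ≥ 0`; then `p(z) = 0` says
`λ² + cλ + m = 0`. A root of a real quadratic with `c > 0` and `m ≥ 0` in the closed right
half-plane must be `0`: the imaginary part `Im λ · (2 Re λ + c)` forces `λ` to be real, and then
`λ(λ + c) = −m ≤ 0` forces `λ = 0`. The remaining case `z = 0` is `p(0) = −λ²`.
-/

theorem Complex.eq_zero_of_sq_add_mul_add_eq_zero_of_re_nonneg {c m : ℝ} (hc : 0 < c)
    (hm : 0 ≤ m) {w : ℂ} (hw : 0 ≤ w.re) (h : w ^ 2 + c * w + m = 0) : w = 0 := by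
  have hre := congrArg Complex.re h
  have him := congrArg Complex.im h
  simp only [sq, Complex.add_re, Complex.add_im, Complex.mul_re, Complex.mul_im,
    Complex.ofReal_re, Complex.ofReal_im, Complex.zero_re, Complex.zero_im] at hre him
  have hw_im : w.im = 0 := by
    have : w.im * (2 * w.re + c) = 0 := by linear_combination him
    exact (mul_eq_zero.1 this).resolve_right (by positivity)
  have hw_re : w.re = 0 := by
    rw [hw_im] at hre
    nlinarith
  exact Complex.ext hw_re hw_im

/-- For `d, a₁₁, a₂₂ > 0` and `λ ∈ ℂ` with `Re λ ≥ 0`, `λ ≠ 0`, the cubic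
`p(z) = dz³ − λa₁₁z² + λa₂₂z − λ²` has no real root `z ≤ 0`; equivalently every
real root is strictly positive. -/
theorem stmt_5 (d a11 a22 : ℝ) (hd : 0 < d) (h11 : 0 < a11) (h22 : 0 < a22)
    (lam : ℂ) (hre : 0 ≤ lam.re) (hlam : lam ≠ 0) :
    (∀ z : ℝ, z ≤ 0 →
      (d : ℂ) * (z : ℂ) ^ 3 - lam * (a11 : ℂ) * (z : ℂ) ^ 2
        + lam * (a22 : ℂ) * (z : ℂ) - lam ^ 2 ≠ 0) ∧
    (∀ z : ℝ,
      (d : ℂ) * (z : ℂ) ^ 3 - lam * (a11 : ℂ) * (z : ℂ) ^ 2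
        + lam * (a22 : ℂ) * (z : ℂ) - lam ^ 2 = 0 → 0 < z) := by
  have no_nonpos_root : ∀ z : ℝ, z ≤ 0 →
      (d : ℂ) * (z : ℂ) ^ 3 - lam * (a11 : ℂ) * (z : ℂ) ^ 2
        + lam * (a22 : ℂ) * (z : ℂ) - lam ^ 2 ≠ 0 := by
    intro z hz hroot
    rcases hz.lt_or_eq with hz_neg | rfl
    · have hc : 0 < a11 * z ^ 2 - a22 * z := by nlinarith [sq_pos_of_neg hz_neg]
      have hm : 0 ≤ -(d * z ^ 3) := by
        nlinarith [mul_nonneg (mul_nonneg hd.le (sq_nonneg z)) (neg_nonneg.2 hz)]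
      refine hlam (Complex.eq_zero_of_sq_add_mul_add_eq_zero_of_re_nonneg hc hm hre ?_)
      push_cast
      linear_combination -hroot
    · exact hlam (by simpa using hroot)
  exact ⟨no_nonpos_root, fun z hroot => not_le.1 fun hz => no_nonpos_root z hz hroot⟩
end

section
/- Let d, a₁₁, a₂₂ be strictly positive real numbers and let λ ∈ ℂ satisfy Re λ ≥ 0 and λ ≠ 0. Then every complex root Λ of the polynomial d·Λ⁶ − λa₁₁Λ⁴ + λa₂₂Λ² − λ² satisfies Re Λ ≠ 0; that is, the polynomial has no purely imaginary roots and no zero root. -/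
/-! On the imaginary axis `Λ = i t` the polynomial equals `-(λ² + (a₁₁t⁴ + a₂₂t²)λ + dt⁶)`.
For `t ≠ 0` this quadratic in `λ` has positive coefficients, so its roots lie in `Re λ < 0`;
for `t = 0` its only root is `λ = 0`. -/

theorem Complex.re_neg_of_sq_add_mul_add_eq_zero {B C : ℝ} (hB : 0 < B) (hC : 0 < C) {z : ℂ}
    (hz : z ^ 2 + B * z + C = 0) : z.re < 0 := by
  have hre : z.re ^ 2 - z.im ^ 2 + B * z.re + C = 0 := by
    simpa [sq] using congrArg Complex.re hz
  have him : z.im * (2 * z.re + B) = 0 := by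
    linear_combination (by simpa [sq] using congrArg Complex.im hz : _ = (0 : ℝ))
  by_contra! hnonneg
  have him0 : z.im = 0 := (mul_eq_zero.mp him).resolve_right (by linarith)
  nlinarith

theorem Complex.sq_eq_neg_im_sq_of_re_eq_zero {z : ℂ} (hz : z.re = 0) :
    z ^ 2 = -((z.im ^ 2 : ℝ) : ℂ) := by
  conv_lhs => rw [← Complex.re_add_im z, hz]
  push_cast
  ring_nf
  rw [Complex.I_sq]
  ring

/-- For `d, a₁₁, a₂₂ > 0` and `λ ∈ ℂ` with `Re λ ≥ 0`, `λ ≠ 0`, every complex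
root `Λ` of `dΛ⁶ − λa₁₁Λ⁴ + λa₂₂Λ² − λ²` satisfies `Re Λ ≠ 0`. -/
theorem stmt_7 (d a11 a22 : ℝ) (hd : 0 < d) (h11 : 0 < a11) (h22 : 0 < a22)
    (lam : ℂ) (hre : 0 ≤ lam.re) (hlam : lam ≠ 0) (Λ : ℂ)
    (hroot : (d : ℂ) * Λ ^ 6 - lam * (a11 : ℂ) * Λ ^ 4
        + lam * (a22 : ℂ) * Λ ^ 2 - lam ^ 2 = 0) :
    Λ.re ≠ 0 := by
  intro hΛ
  set t := Λ.im
  have hquad : lam ^ 2 + ((a11 * t ^ 4 + a22 * t ^ 2 : ℝ) : ℂ) * lam + ((d * t ^ 6 : ℝ) : ℂ) = 0 := by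
    have hsq := Complex.sq_eq_neg_im_sq_of_re_eq_zero hΛ
    rw [show Λ ^ 6 = (Λ ^ 2) ^ 3 by ring, show Λ ^ 4 = (Λ ^ 2) ^ 2 by ring, hsq] at hroot
    push_cast at hroot ⊢
    linear_combination -hroot
  rcases eq_or_ne t 0 with ht | ht
  · exact hlam (by simpa [ht] using hquad)
  · exact hre.not_gt (Complex.re_neg_of_sq_add_mul_add_eq_zero (by positivity) (by positivity) hquad)
end

section
/- Let d, a₁₁, a₂₂ be strictly positive real numbers and let λ ∈ ℂ satisfy Re λ ≥ 0 and λ ≠ 0. Then the degree-6 polynomial d·X⁶ − λa₁₁X⁴ + λa₂₂X² − λ² over ℂ has, counted with multiplicity, exactly three roots with strictly positive real part and exactly three roots with strictly negative real part. -/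
open Polynomial

/-- If `p` is invariant under `X ↦ -X`, root multiplicities at `z` and `-z` agree. -/
lemma rootMult_neg {p : ℂ[X]} (hp : p ≠ 0) (hsym : p.comp (-X) = p) (z : ℂ) :
    p.rootMultiplicity z = p.rootMultiplicity (-z) := by
  have key : ∀ w : ℂ, ∀ n : ℕ, (X - C w) ^ n ∣ p → (X - C (-w)) ^ n ∣ p := by
    intro w n ⟨q, hq⟩
    refine ⟨(-1 : ℂ[X]) ^ n * q.comp (-X), ?_⟩
    have h2 : p.comp (-X) = ((X - C w) ^ n * q).comp (-X) := by rw [hq]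
    rw [hsym, mul_comp, pow_comp, sub_comp, X_comp, C_comp] at h2
    rw [h2, map_neg, sub_neg_eq_add]
    have h3 : (-X - C w : ℂ[X]) = (-1) * (X + C w) := by ring
    rw [h3, mul_pow]
    ring
  apply le_antisymm
  · rw [le_rootMultiplicity_iff hp]
    exact key z _ ((le_rootMultiplicity_iff hp).1 le_rfl)
  · rw [le_rootMultiplicity_iff hp]
    have := key (-z) _ ((le_rootMultiplicity_iff hp).1 le_rfl)
    rwa [neg_neg] at this

/-- For `d, a₁₁, a₂₂ > 0` and `λ ∈ ℂ` with `Re λ ≥ 0`, `λ ≠ 0`, the degree-6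
polynomial `dX⁶ − λa₁₁X⁴ + λa₂₂X² − λ²` over `ℂ` has, counted with
multiplicity, exactly three roots with strictly positive real part and exactly
three roots with strictly negative real part. -/
theorem stmt_8 (d a11 a22 : ℝ) (hd : 0 < d) (h11 : 0 < a11) (h22 : 0 < a22)
    (lam : ℂ) (hre : 0 ≤ lam.re) (hlam : lam ≠ 0) :
    (((C (d : ℂ) * X ^ 6 - C lam * C (a11 : ℂ) * X ^ 4
        + C lam * C (a22 : ℂ) * X ^ 2 - C (lam ^ 2)).roots.filter
          (fun z : ℂ => 0 < z.re)).card = 3) ∧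
    (((C (d : ℂ) * X ^ 6 - C lam * C (a11 : ℂ) * X ^ 4
        + C lam * C (a22 : ℂ) * X ^ 2 - C (lam ^ 2)).roots.filter
          (fun z : ℂ => z.re < 0)).card = 3) := by
  set p : ℂ[X] := C (d : ℂ) * X ^ 6 - C lam * C (a11 : ℂ) * X ^ 4
      + C lam * C (a22 : ℂ) * X ^ 2 - C (lam ^ 2) with hp_def
  have hdeg : p.natDegree = 6 := by
    rw [hp_def]; compute_degree!
    exact hd.ne'
  have hp0 : p ≠ 0 := by
    intro h; rw [h] at hdeg; simp at hdeg
  -- symmetry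
  have hsym : p.comp (-X) = p := by
    rw [hp_def]
    simp only [sub_comp, add_comp, mul_comp, pow_comp, C_comp, X_comp]
    ring
  -- no root on the imaginary axis
  have hax : ∀ z ∈ p.roots, z.re ≠ 0 := by
    intro z hz hz0
    have hev : p.eval z = 0 := (mem_roots hp0).1 hz
    rw [hp_def] at hev
    simp only [eval_sub, eval_add, eval_mul, eval_pow, eval_C, eval_X] at hev
    set t : ℝ := z.im with ht
    have hzI : z = (t : ℂ) * Complex.I := by
      apply Complex.ext <;> simp [hz0, ht]
    rw [hzI, mul_pow, mul_pow, mul_pow] at hev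
    have hI2 : (Complex.I : ℂ) ^ 2 = -1 := Complex.I_sq
    have hI4 : (Complex.I : ℂ) ^ 4 = 1 := by
      rw [show (4:ℕ) = 2*2 by rfl, pow_mul, hI2]; norm_num
    have hI6 : (Complex.I : ℂ) ^ 6 = -1 := by
      rw [show (6:ℕ) = 2+4 by rfl, pow_add, hI2, hI4]; norm_num
    rw [hI2, hI4, hI6] at hev
    have hev2 : (lam ^ 2 + lam * ((a11 : ℂ) * t ^ 4 + (a22 : ℂ) * t ^ 2)
        + (d : ℂ) * t ^ 6) = 0 := by linear_combination -hev
    set u : ℝ := lam.re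
    set v : ℝ := lam.im
    have hR : u ^ 2 - v ^ 2 + u * (a11 * t ^ 4 + a22 * t ^ 2) + d * t ^ 6 = 0 := by
      have h := congrArg Complex.re hev2
      simp [pow_two, Complex.add_re, Complex.add_im, Complex.mul_re,
        Complex.mul_im, ← Complex.ofReal_pow, ← Complex.ofReal_mul] at h
      nlinarith [h]
    have hI : v * (2 * u + (a11 * t ^ 4 + a22 * t ^ 2)) = 0 := by
      have h := congrArg Complex.im hev2
      simp [pow_two, Complex.add_re, Complex.add_im, Complex.mul_re,
        Complex.mul_im, ← Complex.ofReal_pow, ← Complex.ofReal_mul] at h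
      nlinarith [h]
    have hb : 0 ≤ a11 * t ^ 4 + a22 * t ^ 2 := by positivity
    have hlam' : u ≠ 0 ∨ v ≠ 0 := by
      by_contra h
      push_neg at h
      exact hlam (Complex.ext h.1 h.2)
    rcases mul_eq_zero.1 hI with hv | hs
    · rcases hlam' with hu | hv'
      · have hu' : 0 < u := lt_of_le_of_ne hre (Ne.symm hu)
        nlinarith [mul_nonneg hu'.le hb, mul_nonneg hd.le (sq_nonneg (t^3)),
          sq_nonneg u]
      · exact hv' hv
    · have h4 : 0 ≤ a11 * t ^ 4 := by positivity
      have h2' : 0 ≤ a22 * t ^ 2 := by positivity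
      have h22t : a22 * t ^ 2 = 0 := by linarith
      have ht2 : t ^ 2 = 0 := by
        rcases mul_eq_zero.1 h22t with h | h
        · exact absurd h h22.ne'
        · exact h
      have ht0 : t = 0 := by
        have h := pow_eq_zero_iff (n := 2) (by norm_num) |>.1 ht2
        exact h
      have hu0 : u = 0 := by rw [ht0] at hs; nlinarith
      have hv0 : v = 0 := by rw [ht0, hu0] at hR; nlinarith
      exact hlam (Complex.ext hu0 hv0)
  -- roots multiset is symmetric under negation
  have hmap : p.roots.map (fun z : ℂ => -z) = p.roots := by
    ext a
    rw [← neg_neg a, Multiset.count_map_eq_count' _ _ neg_injective,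
      count_roots, count_roots]
    exact rootMult_neg hp0 hsym (-a)
  have hcard : Multiset.card p.roots = 6 := by
    rw [splits_iff_card_roots.1 (IsAlgClosed.splits p), hdeg]
  -- equal counts of positive- and negative-real-part roots
  have heq : (p.roots.filter (fun z : ℂ => 0 < z.re)).card
      = (p.roots.filter (fun z : ℂ => z.re < 0)).card := by
    calc (p.roots.filter (fun z : ℂ => 0 < z.re)).card
        = ((p.roots.map (fun z : ℂ => -z)).filter (fun z : ℂ => 0 < z.re)).card := by
          rw [hmap]
      _ = Multiset.countP (fun z : ℂ => 0 < z.re) (p.roots.map (fun z : ℂ => -z)) :=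
          (Multiset.countP_eq_card_filter _ _).symm
      _ = (p.roots.filter (fun a : ℂ => 0 < (-a).re)).card := Multiset.countP_map _ _ _
      _ = (p.roots.filter (fun z : ℂ => z.re < 0)).card := by
          congr 1
          apply Multiset.filter_congr
          intro x _
          simp [Complex.neg_re]
  have hsum : (p.roots.filter (fun z : ℂ => 0 < z.re)).card
      + (p.roots.filter (fun z : ℂ => z.re < 0)).card = 6 := by
    have h1 : p.roots.filter (fun z : ℂ => ¬ 0 < z.re)
        = p.roots.filter (fun z : ℂ => z.re < 0) := by
      apply Multiset.filter_congr
      intro x hx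
      have := hax x hx
      constructor
      · intro h; cases lt_or_gt_of_ne this with
        | inl h' => exact h'
        | inr h' => exact absurd h' h
      · intro h; exact not_lt.2 h.le
    have h2 := congrArg Multiset.card
      (Multiset.filter_add_not (fun z : ℂ => 0 < z.re) p.roots)
    rw [Multiset.card_add, h1, hcard] at h2
    exact h2
  constructor
  · omega
  · omega
end

section
/- Let L > 0, T > 0, 𝒟 > 0, and σ ∈ C²(ℝ). Let h, Γ : [0,T] × [0,L] → ℝ be a classical solution of the thin film system with insoluble surfactant with no-flux boundary conditions, with h(t,x) > 0 and Γ(t,x) > 0 for all (t,x). Let Φ : (0,∞) → ℝ be twice continuously differentiable with Φ″(s) = −σ′(s)/s for all s > 0, and define E(t) = ∫₀ᴸ [ (1/2)(∂ₓh(t,x))² + Φ(Γ(t,x)) ] dx. Then for all t ∈ (0,T): dE/dt = −(3/2)∫₀ᴸ ((h^{3/2}/3)∂ₓ³h + (h^{1/2}/2)∂ₓ(σ∘Γ))² dx − (1/2)∫₀ᴸ ((h^{3/2}/2)∂ₓ³h + h^{1/2}∂ₓ(σ∘Γ))² dx − (1/24)∫₀ᴸ h³(∂ₓ³h)² dx −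 (1/8)∫₀ᴸ h(∂ₓ(σ∘Γ))² dx − 𝒟∫₀ᴸ Φ″(Γ)(∂ₓΓ)² dx. In particular, if σ′(s) ≤ 0 for all s > 0, then E is nonincreasing on (0,T). -/
/-!
Differentiating under the integral sign gives `E' = ∫ hₓ hₓₜ + Φ'(Γ) Γₜ`. Write the equations as
`hₜ + (F₁)ₓ = 0` and `Γₜ + (F₂)ₓ = 𝒟 Γₓₓ` with the fluxes `F₁ = h³/3 hₓₓₓ + h²/2 σ(Γ)ₓ` and
`F₂ = Γ (h²/2 hₓₓₓ + h σ(Γ)ₓ)`. The no-flux conditions make `hₓ`, `Γₓ`, `σ(Γ)ₓ = σ'(Γ) Γₓ`, `F₁`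
and `F₂` vanish at both ends, so no integration by parts produces boundary terms: after swapping
`∂ₓ∂ₜ`, `∫ hₓ hₓₜ = -∫ hₓₓ hₜ = -∫ hₓₓₓ F₁`, and `∫ Φ'(Γ) Γₜ = ∫ Φ''(Γ) Γₓ F₂ - 𝒟 ∫ Φ''(Γ) Γₓ²`.
Since `Φ''(Γ) Γ = -σ'(Γ)`, `Φ''(Γ) Γₓ F₂ = -σ(Γ)ₓ (h²/2 hₓₓₓ + h σ(Γ)ₓ)`, and what is left,
`hₓₓₓ F₁ + σ(Γ)ₓ (h²/2 hₓₓₓ + h σ(Γ)ₓ)`, is a quadratic form in `(hₓₓₓ, σ(Γ)ₓ)` that splits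
pointwise into the stated sum of squares. When `σ' ≤ 0` also `Φ'' ≥ 0`, so `E' ≤ 0`.
-/

open Set Function MeasureTheory
open scoped ContDiff

-- Curried on purpose: `partialX h t x` is definitionally the statement's `deriv (h t) x`.
noncomputable def partialX (u : ℝ → ℝ → ℝ) : ℝ → ℝ → ℝ := fun t x => deriv (u t) x

noncomputable def partialT (u : ℝ → ℝ → ℝ) : ℝ → ℝ → ℝ := fun t x => deriv (fun s => u s x) t

section PartialDerivatives

variable {u : ℝ → ℝ → ℝ} {t x : ℝ}

theorem partialX_eq_fderiv (hu : DifferentiableAt ℝ (uncurry u) (t, x)) :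
    partialX u t x = fderiv ℝ (uncurry u) (t, x) (0, 1) :=
  (hu.hasFDerivAt.comp_hasDerivAt x ((hasDerivAt_const x t).prodMk (hasDerivAt_id x))).deriv

theorem partialT_eq_fderiv (hu : DifferentiableAt ℝ (uncurry u) (t, x)) :
    partialT u t x = fderiv ℝ (uncurry u) (t, x) (1, 0) :=
  (hu.hasFDerivAt.comp_hasDerivAt (f := fun s => (s, x)) t
    ((hasDerivAt_id' t).prodMk (hasDerivAt_const t x))).deriv

theorem hasDerivAt_partialX (hu : DifferentiableAt ℝ (uncurry u) (t, x)) :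
    HasDerivAt (u t) (partialX u t x) x :=
  (hu.comp x ((differentiableAt_const t).prodMk differentiableAt_id)).hasDerivAt

theorem hasDerivAt_partialT (hu : DifferentiableAt ℝ (uncurry u) (t, x)) :
    HasDerivAt (fun s => u s x) (partialT u t x) t :=
  (hu.comp (f := fun s => (s, x)) t
    (differentiableAt_fun_id.prodMk (differentiableAt_const x))).hasDerivAt

theorem uncurry_partialX_eq_fderiv (hu : Differentiable ℝ (uncurry u)) :
    uncurry (partialX u) = fun p => fderiv ℝ (uncurry u) p (0, 1) :=
  funext fun p => partialX_eq_fderiv (hu p)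

theorem uncurry_partialT_eq_fderiv (hu : Differentiable ℝ (uncurry u)) :
    uncurry (partialT u) = fun p => fderiv ℝ (uncurry u) p (1, 0) :=
  funext fun p => partialT_eq_fderiv (hu p)

theorem ContDiff.uncurry_partialX {m n : WithTop ℕ∞} (hu : ContDiff ℝ n (uncurry u))
    (hmn : m + 1 ≤ n) : ContDiff ℝ m (uncurry (partialX u)) := by
  rw [uncurry_partialX_eq_fderiv
    (hu.differentiable (zero_lt_one.trans_le (le_add_self.trans hmn)).ne')]
  exact (hu.fderiv_right hmn).clm_apply contDiff_const

theorem ContDiff.uncurry_partialT {m n : WithTop ℕ∞} (hu : ContDiff ℝ n (uncurry u))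
    (hmn : m + 1 ≤ n) : ContDiff ℝ m (uncurry (partialT u)) := by
  rw [uncurry_partialT_eq_fderiv
    (hu.differentiable (zero_lt_one.trans_le (le_add_self.trans hmn)).ne')]
  exact (hu.fderiv_right hmn).clm_apply contDiff_const

theorem partialT_partialX (hu : ContDiff ℝ 2 (uncurry u)) :
    partialT (partialX u) = partialX (partialT u) := by
  have hd : Differentiable ℝ (uncurry u) := hu.differentiable two_ne_zero
  have hd2 : Differentiable ℝ (fderiv ℝ (uncurry u)) :=
    (hu.fderiv_right (m := 1) (by norm_num)).differentiable one_ne_zero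
  ext t x
  rw [partialT_eq_fderiv ((hu.uncurry_partialX (m := 1) (by norm_num)).differentiable
      one_ne_zero _),
    partialX_eq_fderiv ((hu.uncurry_partialT (m := 1) (by norm_num)).differentiable
      one_ne_zero _),
    uncurry_partialX_eq_fderiv hd, uncurry_partialT_eq_fderiv hd,
    fderiv_clm_apply (hd2 _) (differentiableAt_const _),
    fderiv_clm_apply (hd2 _) (differentiableAt_const _)]
  simpa using (hu.contDiffAt.isSymmSndFDerivAt (by simp [minSmoothness_of_isRCLikeNormedField])).eq
    (1, 0) (0, 1)

theorem iteratedDeriv_eq_iterate_partialX (u : ℝ → ℝ → ℝ) (n : ℕ) (t : ℝ) :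
    iteratedDeriv n (u t) = partialX^[n] u t := by
  induction n with
  | zero => rfl
  | succ n ih => rw [iteratedDeriv_succ, ih, Function.iterate_succ_apply']; rfl

theorem partialX_comp {g : ℝ → ℝ} (hg : DifferentiableAt ℝ g (u t x))
    (hu : DifferentiableAt ℝ (uncurry u) (t, x)) :
    partialX (fun s y => g (u s y)) t x = deriv g (u t x) * partialX u t x :=
  (hg.hasDerivAt.comp x (hasDerivAt_partialX hu)).deriv

theorem ContDiff.uncurry_iterate_partialX (hu : ContDiff ℝ ∞ (uncurry u))
    (n : ℕ) : ContDiff ℝ ∞ (uncurry (partialX^[n] u)) := by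
  induction n with
  | zero => exact hu
  | succ n ih => rw [Function.iterate_succ_apply']; exact ih.uncurry_partialX (by simp)

end PartialDerivatives

theorem intervalIntegral.integral_mul_deriv_eq_neg_deriv_mul {a b : ℝ} {u u' v v' : ℝ → ℝ}
    (hu : ∀ x ∈ uIcc a b, HasDerivAt u (u' x) x) (hv : ∀ x ∈ uIcc a b, HasDerivAt v (v' x) x)
    (hu' : IntervalIntegrable u' volume a b) (hv' : IntervalIntegrable v' volume a b)
    (ha : u a * v a = 0) (hb : u b * v b = 0) :
    ∫ x in a..b, u x * v' x = -∫ x in a..b, u' x * v x := by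
  rw [integral_mul_deriv_eq_deriv_mul hu hv hu' hv', ha, hb, sub_zero, zero_sub]

theorem intervalIntegral.hasDerivAt_integral_of_continuousOn {a b c d t : ℝ}
    {F F' : ℝ → ℝ → ℝ} (hab : a ≤ b) (ht : t ∈ Ioo c d)
    (hF : ContinuousOn (uncurry F) (Icc c d ×ˢ Icc a b))
    (hF' : ContinuousOn (uncurry F') (Icc c d ×ˢ Icc a b))
    (hderiv : ∀ τ ∈ Ioo c d, ∀ x ∈ Icc a b, HasDerivAt (F · x) (F' τ x) τ) :
    HasDerivAt (fun τ => ∫ x in a..b, F τ x) (∫ x in a..b, F' t x) t := by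
  have slice : ∀ {G : ℝ → ℝ → ℝ}, ContinuousOn (uncurry G) (Icc c d ×ˢ Icc a b) →
      ∀ τ ∈ Icc c d, IntervalIntegrable (G τ) volume a b := fun hG τ hτ =>
    (hG.comp (Continuous.prodMk_right τ).continuousOn fun x hx => ⟨hτ, hx⟩
      ).intervalIntegrable_of_Icc hab
  have hIoc : uIoc a b ⊆ Icc a b := by rw [uIoc_of_le hab]; exact Ioc_subset_Icc_self
  obtain ⟨C, hC⟩ := (isCompact_Icc.prod isCompact_Icc).exists_bound_of_continuousOn hF'
  refine (intervalIntegral.hasDerivAt_integral_of_dominated_loc_of_deriv_le (bound := fun _ => C)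
    (Ioo_mem_nhds ht.1 ht.2) ?_ (slice hF t (Ioo_subset_Icc_self ht))
    (slice hF' t (Ioo_subset_Icc_self ht)).def'.aestronglyMeasurable ?_ intervalIntegrable_const
    ?_).2
  · filter_upwards [Ioo_mem_nhds ht.1 ht.2] with τ hτ
    exact (slice hF τ (Ioo_subset_Icc_self hτ)).def'.aestronglyMeasurable
  · filter_upwards with x hx τ hτ
    exact hC (τ, x) ⟨Ioo_subset_Icc_self hτ, hIoc hx⟩
  · filter_upwards with x hx τ hτ
    exact hderiv τ hτ x (hIoc hx)

theorem ContDiffOn.hasDerivAt_deriv {Φ : ℝ → ℝ} {s : Set ℝ} {y : ℝ} (hΦ : ContDiffOn ℝ 2 Φ s)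
    (hs : IsOpen s) (hy : y ∈ s) : HasDerivAt (deriv Φ) (iteratedDeriv 2 Φ y) y := by
  rw [iteratedDeriv_succ, iteratedDeriv_one]
  exact (((hΦ.deriv_of_isOpen hs (m := 1) (by norm_num)).differentiableOn one_ne_zero y hy
    ).differentiableAt (hs.mem_nhds hy)).hasDerivAt

theorem ContDiffOn.continuousOn_iteratedDeriv_two {Φ : ℝ → ℝ} {s : Set ℝ}
    (hΦ : ContDiffOn ℝ 2 Φ s) (hs : IsOpen s) : ContinuousOn (iteratedDeriv 2 Φ) s := by
  rw [iteratedDeriv_succ, iteratedDeriv_one]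
  exact (hΦ.deriv_of_isOpen hs (m := 1) (by norm_num)).continuousOn_deriv_of_isOpen hs le_rfl

theorem integral_mul_partialX_eq_neg {U V : ℝ → ℝ → ℝ} {a b t : ℝ}
    (hU : ContDiff ℝ 1 (uncurry U)) (hV : ContDiff ℝ 1 (uncurry V))
    (ha : U t a * V t a = 0) (hb : U t b * V t b = 0) :
    ∫ x in a..b, U t x * partialX V t x = -∫ x in a..b, partialX U t x * V t x :=
  intervalIntegral.integral_mul_deriv_eq_neg_deriv_mul
    (fun x _ => hasDerivAt_partialX (hU.differentiable one_ne_zero _))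
    (fun x _ => hasDerivAt_partialX (hV.differentiable one_ne_zero _))
    (((hU.uncurry_partialX (m := 0) (by norm_num)).continuous.uncurry_left t).intervalIntegrable
      a b)
    (((hV.uncurry_partialX (m := 0) (by norm_num)).continuous.uncurry_left t).intervalIntegrable
      a b) ha hb

theorem integral_deriv_comp_mul_partialX_eq_neg {w G : ℝ → ℝ → ℝ} {Φ : ℝ → ℝ} {s : Set ℝ}
    {a b t : ℝ} (hab : a ≤ b) (hw : ContDiff ℝ 1 (uncurry w)) (hG : ContDiff ℝ 1 (uncurry G))
    (hΦ : ContDiffOn ℝ 2 Φ s) (hs : IsOpen s) (hws : ∀ x ∈ Icc a b, w t x ∈ s)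
    (hGa : G t a = 0) (hGb : G t b = 0) :
    ∫ x in a..b, deriv Φ (w t x) * partialX G t x =
      -∫ x in a..b, iteratedDeriv 2 Φ (w t x) * partialX w t x * G t x := by
  have hws' : MapsTo (w t) (uIcc a b) s := fun x hx => hws x (by rwa [uIcc_of_le hab] at hx)
  refine intervalIntegral.integral_mul_deriv_eq_neg_deriv_mul
    (fun x hx => (hΦ.hasDerivAt_deriv hs (hws' hx)).comp x
      (hasDerivAt_partialX (hw.differentiable one_ne_zero _)))
    (fun x _ => hasDerivAt_partialX (hG.differentiable one_ne_zero _))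
    ((((hΦ.continuousOn_iteratedDeriv_two hs).comp (hw.continuous.uncurry_left t).continuousOn
      hws').mul ((hw.uncurry_partialX (m := 0) (by norm_num)).continuous.uncurry_left t
      ).continuousOn).intervalIntegrable)
    (((hG.uncurry_partialX (m := 0) (by norm_num)).continuous.uncurry_left t).intervalIntegrable
      a b) (by rw [hGa, mul_zero]) (by rw [hGb, mul_zero])

theorem integral_partialX_mul_partialT_partialX {u F : ℝ → ℝ → ℝ} {a b t : ℝ} (hab : a ≤ b)
    (hu : ContDiff ℝ ∞ (uncurry u)) (hF : ContDiff ℝ 1 (uncurry F))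
    (hpde : ∀ x ∈ Ioo a b, partialT u t x + partialX F t x = 0)
    (hua : partialX u t a = 0) (hub : partialX u t b = 0) (hFa : F t a = 0) (hFb : F t b = 0) :
    ∫ x in a..b, partialX u t x * partialT (partialX u) t x =
      -∫ x in a..b, partialX^[3] u t x * F t x := by
  have smooth : ∀ n, ContDiff ℝ 1 (uncurry (partialX^[n] u)) := fun n =>
    (hu.uncurry_iterate_partialX n).of_le ENat.LEInfty.out
  calc ∫ x in a..b, partialX u t x * partialT (partialX u) t x
      = ∫ x in a..b, partialX u t x * partialX (partialT u) t x := by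
        rw [partialT_partialX (hu.of_le ENat.LEInfty.out)]
    _ = -∫ x in a..b, partialX^[2] u t x * partialT u t x :=
        integral_mul_partialX_eq_neg (smooth 1) (hu.uncurry_partialT (by norm_cast))
          (by rw [hua, zero_mul]) (by rw [hub, zero_mul])
    _ = ∫ x in a..b, partialX^[2] u t x * partialX F t x := by
        rw [← intervalIntegral.integral_neg]
        refine intervalIntegral.integral_congr_Ioo_of_le hab fun x hx => ?_
        simp only [eq_neg_of_add_eq_zero_left (hpde x hx), mul_neg, neg_neg]
    _ = -∫ x in a..b, partialX^[3] u t x * F t x :=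
        integral_mul_partialX_eq_neg (smooth 2) hF (by rw [hFa, mul_zero]) (by rw [hFb, mul_zero])

theorem integral_deriv_comp_mul_partialT {w F : ℝ → ℝ → ℝ} {Φ : ℝ → ℝ} {s : Set ℝ}
    {a b t D : ℝ} (hab : a ≤ b) (hw : ContDiff ℝ ∞ (uncurry w)) (hF : ContDiff ℝ 1 (uncurry F))
    (hΦ : ContDiffOn ℝ 2 Φ s) (hs : IsOpen s) (hws : ∀ x ∈ Icc a b, w t x ∈ s)
    (hpde : ∀ x ∈ Ioo a b, partialT w t x + partialX F t x = D * partialX^[2] w t x)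
    (hwa : partialX w t a = 0) (hwb : partialX w t b = 0) (hFa : F t a = 0) (hFb : F t b = 0) :
    ∫ x in a..b, deriv Φ (w t x) * partialT w t x =
      (∫ x in a..b, iteratedDeriv 2 Φ (w t x) * partialX w t x * F t x)
        - D * ∫ x in a..b, iteratedDeriv 2 Φ (w t x) * partialX w t x ^ 2 := by
  have hw1 : ContDiff ℝ 1 (uncurry w) := hw.of_le ENat.LEInfty.out
  have hwx : ContDiff ℝ 1 (uncurry (partialX w)) := hw.uncurry_partialX (by norm_cast)
  have hΦw : ContinuousOn (fun x => deriv Φ (w t x)) (uIcc a b) :=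
    (hΦ.continuousOn_deriv_of_isOpen hs one_le_two).comp (hw.continuous.uncurry_left t).continuousOn
      fun x hx => hws x (by rwa [uIcc_of_le hab] at hx)
  have intF : IntervalIntegrable (fun x => deriv Φ (w t x) * partialX F t x) volume a b :=
    (hΦw.mul ((hF.uncurry_partialX (m := 0) (by norm_num)).continuous.uncurry_left t
      ).continuousOn).intervalIntegrable
  have intw : IntervalIntegrable (fun x => deriv Φ (w t x) * partialX^[2] w t x) volume a b :=
    (hΦw.mul ((hwx.uncurry_partialX (m := 0) (by norm_num)).continuous.uncurry_left t
      ).continuousOn).intervalIntegrable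
  calc ∫ x in a..b, deriv Φ (w t x) * partialT w t x
      = ∫ x in a..b, (D * (deriv Φ (w t x) * partialX^[2] w t x)
          - deriv Φ (w t x) * partialX F t x) := by
        refine intervalIntegral.integral_congr_Ioo_of_le hab fun x hx => ?_
        simp only [eq_sub_of_add_eq (hpde x hx)]
        ring
    _ = _ := by
      rw [intervalIntegral.integral_sub (intw.const_mul D) intF,
        intervalIntegral.integral_const_mul, show partialX^[2] w = partialX (partialX w) from rfl,
        integral_deriv_comp_mul_partialX_eq_neg hab hw1 hF hΦ hs hws hFa hFb,
        integral_deriv_comp_mul_partialX_eq_neg (G := partialX w) hab hw1 hwx hΦ hs hws hwa hwb]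
      simp only [mul_assoc, ← sq]
      ring

theorem mul_flux_add_mul_flux_eq_sum_sq {h a b : ℝ} (hh : 0 ≤ h) :
    a * (h ^ 3 / 3 * a + h ^ 2 / 2 * b) + b * (h ^ 2 / 2 * a + h * b) =
      3 / 2 * (h ^ ((3 : ℝ) / 2) / 3 * a + h ^ ((1 : ℝ) / 2) / 2 * b) ^ 2
        + 1 / 2 * (h ^ ((3 : ℝ) / 2) / 2 * a + h ^ ((1 : ℝ) / 2) * b) ^ 2
        + 1 / 24 * (h ^ 3 * a ^ 2) + 1 / 8 * (h * b ^ 2) := by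
  have h32 : h ^ ((3 : ℝ) / 2) = h * h ^ ((1 : ℝ) / 2) := by
    rw [← Real.rpow_one_add' hh (by norm_num)]; norm_num
  have hsq : h = (h ^ ((1 : ℝ) / 2)) ^ 2 := by
    rw [← Real.rpow_natCast, ← Real.rpow_mul hh]; norm_num
  rw [h32]
  -- both sides are polynomials in `h` and `h ^ (1 / 2)`, equal modulo `hsq`
  linear_combination (7 / 24 * h ^ 2 * a ^ 2 + h * a * b + 7 / 8 * b ^ 2) * hsq

theorem integral_mul_flux_add_mul_flux_eq_sum_sq {a b : ℝ} {p q r : ℝ → ℝ} (hab : a ≤ b)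
    (hp : Continuous p) (hq : Continuous q) (hr : Continuous r) (hp0 : ∀ x ∈ Icc a b, 0 ≤ p x) :
    ∫ x in a..b, (q x * (p x ^ 3 / 3 * q x + p x ^ 2 / 2 * r x)
        + r x * (p x ^ 2 / 2 * q x + p x * r x)) =
      3 / 2 * (∫ x in a..b, (p x ^ ((3 : ℝ) / 2) / 3 * q x + p x ^ ((1 : ℝ) / 2) / 2 * r x) ^ 2)
        + 1 / 2 * (∫ x in a..b, (p x ^ ((3 : ℝ) / 2) / 2 * q x + p x ^ ((1 : ℝ) / 2) * r x) ^ 2)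
        + 1 / 24 * (∫ x in a..b, p x ^ 3 * q x ^ 2) + 1 / 8 * (∫ x in a..b, p x * r x ^ 2) := by
  have hp32 : Continuous fun x => p x ^ ((3 : ℝ) / 2) := hp.rpow_const fun _ => Or.inr (by norm_num)
  have hp12 : Continuous fun x => p x ^ ((1 : ℝ) / 2) := hp.rpow_const fun _ => Or.inr (by norm_num)
  rw [intervalIntegral.integral_congr fun x hx =>
      mul_flux_add_mul_flux_eq_sum_sq (hp0 x (by rwa [uIcc_of_le hab] at hx)),
    intervalIntegral.integral_add, intervalIntegral.integral_add, intervalIntegral.integral_add,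
    intervalIntegral.integral_const_mul, intervalIntegral.integral_const_mul,
    intervalIntegral.integral_const_mul, intervalIntegral.integral_const_mul]
  all_goals exact Continuous.intervalIntegrable (by fun_prop) a b

def surfaceTension (σ : ℝ → ℝ) (Γ : ℝ → ℝ → ℝ) : ℝ → ℝ → ℝ := fun t x => σ (Γ t x)

noncomputable def heightFlux (σ : ℝ → ℝ) (h Γ : ℝ → ℝ → ℝ) : ℝ → ℝ → ℝ := fun t x =>
  h t x ^ 3 / 3 * partialX^[3] h t x + h t x ^ 2 / 2 * partialX (surfaceTension σ Γ) t x

noncomputable def surfactantFlux (σ : ℝ → ℝ) (h Γ : ℝ → ℝ → ℝ) : ℝ → ℝ → ℝ := fun t x =>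
  h t x ^ 2 / 2 * Γ t x * partialX^[3] h t x + h t x * Γ t x * partialX (surfaceTension σ Γ) t x

noncomputable def energy (Φ : ℝ → ℝ) (h Γ : ℝ → ℝ → ℝ) (L t : ℝ) : ℝ :=
  ∫ x in (0 : ℝ)..L, (partialX h t x ^ 2 / 2 + Φ (Γ t x))

noncomputable def dissipation (D : ℝ) (σ Φ : ℝ → ℝ) (h Γ : ℝ → ℝ → ℝ) (L t : ℝ) : ℝ :=
  -(3 / 2) * (∫ x in (0 : ℝ)..L, (h t x ^ ((3 : ℝ) / 2) / 3 * partialX^[3] h t x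
      + h t x ^ ((1 : ℝ) / 2) / 2 * partialX (surfaceTension σ Γ) t x) ^ 2)
    - (1 / 2) * (∫ x in (0 : ℝ)..L, (h t x ^ ((3 : ℝ) / 2) / 2 * partialX^[3] h t x
      + h t x ^ ((1 : ℝ) / 2) * partialX (surfaceTension σ Γ) t x) ^ 2)
    - (1 / 24) * (∫ x in (0 : ℝ)..L, h t x ^ 3 * partialX^[3] h t x ^ 2)
    - (1 / 8) * (∫ x in (0 : ℝ)..L, h t x * partialX (surfaceTension σ Γ) t x ^ 2)
    - D * (∫ x in (0 : ℝ)..L, iteratedDeriv 2 Φ (Γ t x) * partialX Γ t x ^ 2)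

section ThinFilm

variable {L T D t : ℝ} {σ Φ : ℝ → ℝ} {h Γ : ℝ → ℝ → ℝ}

theorem contDiff_uncurry_partialX_surfaceTension (hσ : ContDiff ℝ 2 σ)
    (hΓ : ContDiff ℝ ∞ (uncurry Γ)) : ContDiff ℝ 1 (uncurry (partialX (surfaceTension σ Γ))) :=
  ContDiff.uncurry_partialX (hσ.comp (hΓ.of_le ENat.LEInfty.out)) (by norm_num)

theorem partialX_surfaceTension (hσ : ContDiff ℝ 2 σ) (hΓ : ContDiff ℝ ∞ (uncurry Γ)) (t x : ℝ) :
    partialX (surfaceTension σ Γ) t x = deriv σ (Γ t x) * partialX Γ t x :=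
  partialX_comp (hσ.differentiable two_ne_zero _) (hΓ.differentiable (by simp) _)

theorem contDiff_uncurry_heightFlux (hσ : ContDiff ℝ 2 σ) (hh : ContDiff ℝ ∞ (uncurry h))
    (hΓ : ContDiff ℝ ∞ (uncurry Γ)) : ContDiff ℝ 1 (uncurry (heightFlux σ h Γ)) := by
  have h0 : ContDiff ℝ 1 (uncurry h) := hh.of_le ENat.LEInfty.out
  have h3 : ContDiff ℝ 1 (uncurry (partialX^[3] h)) :=
    (hh.uncurry_iterate_partialX 3).of_le ENat.LEInfty.out
  exact ((h0.pow 3).div_const 3 |>.mul h3).add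
    (((h0.pow 2).div_const 2).mul (contDiff_uncurry_partialX_surfaceTension hσ hΓ))

theorem contDiff_uncurry_surfactantFlux (hσ : ContDiff ℝ 2 σ) (hh : ContDiff ℝ ∞ (uncurry h))
    (hΓ : ContDiff ℝ ∞ (uncurry Γ)) : ContDiff ℝ 1 (uncurry (surfactantFlux σ h Γ)) := by
  have h0 : ContDiff ℝ 1 (uncurry h) := hh.of_le ENat.LEInfty.out
  have g0 : ContDiff ℝ 1 (uncurry Γ) := hΓ.of_le ENat.LEInfty.out
  have h3 : ContDiff ℝ 1 (uncurry (partialX^[3] h)) :=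
    (hh.uncurry_iterate_partialX 3).of_le ENat.LEInfty.out
  exact (((h0.pow 2).div_const 2).mul g0 |>.mul h3).add
    ((h0.mul g0).mul (contDiff_uncurry_partialX_surfaceTension hσ hΓ))

theorem hasDerivAt_energy (hL : 0 ≤ L) (hh : ContDiff ℝ ∞ (uncurry h))
    (hΓ : ContDiff ℝ ∞ (uncurry Γ)) (hΦ : ContDiffOn ℝ 1 Φ (Ioi 0))
    (hΓ0 : ∀ τ ∈ Icc 0 T, ∀ x ∈ Icc 0 L, 0 < Γ τ x) (ht : t ∈ Ioo 0 T) :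
    HasDerivAt (energy Φ h Γ L)
      (∫ x in (0 : ℝ)..L, (partialX h t x * partialT (partialX h) t x
        + deriv Φ (Γ t x) * partialT Γ t x)) t := by
  have hx := hh.uncurry_partialX (m := ∞) (by simp)
  have hxt := hx.uncurry_partialT (m := ∞) (by simp)
  have ht' := hΓ.uncurry_partialT (m := ∞) (by simp)
  have hΓ0' : MapsTo (uncurry Γ) (Icc 0 T ×ˢ Icc 0 L) (Ioi 0) := fun p hp => hΓ0 p.1 hp.1 p.2 hp.2
  refine intervalIntegral.hasDerivAt_integral_of_continuousOn
    (F := fun τ x => partialX h τ x ^ 2 / 2 + Φ (Γ τ x))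
    (F' := fun τ x => partialX h τ x * partialT (partialX h) τ x + deriv Φ (Γ τ x) * partialT Γ τ x)
    hL ht
    ((((hx.continuous.pow 2).div_const 2).continuousOn).add
      (hΦ.continuousOn.comp hΓ.continuous.continuousOn hΓ0'))
    (((hx.continuous.mul hxt.continuous).continuousOn).add
      (((hΦ.continuousOn_deriv_of_isOpen isOpen_Ioi le_rfl).comp hΓ.continuous.continuousOn
        hΓ0').mul ht'.continuous.continuousOn)) fun τ hτ x hx' => ?_
  have hΦτ : HasDerivAt Φ (deriv Φ (Γ τ x)) (Γ τ x) :=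
    ((hΦ.differentiableOn one_ne_zero _ (hΓ0 τ (Ioo_subset_Icc_self hτ) x hx')).differentiableAt
      (Ioi_mem_nhds (hΓ0 τ (Ioo_subset_Icc_self hτ) x hx'))).hasDerivAt
  refine ((((hasDerivAt_partialT (hx.differentiable (by simp) (τ, x))).fun_pow 2).div_const 2).add
    (hΦτ.comp τ (hasDerivAt_partialT (hΓ.differentiable (by simp) (τ, x))))).congr_deriv ?_
  push_cast
  ring

theorem heightFlux_eq_zero_and_surfactantFlux_eq_zero (hσ : ContDiff ℝ 2 σ)
    (hΓ : ContDiff ℝ ∞ (uncurry Γ)) {x : ℝ} (h3 : partialX^[3] h t x = 0)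
    (hΓx : partialX Γ t x = 0) : heightFlux σ h Γ t x = 0 ∧ surfactantFlux σ h Γ t x = 0 := by
  simp [heightFlux, surfactantFlux, h3, partialX_surfaceTension hσ hΓ, hΓx]

theorem iteratedDeriv_two_mul_partialX_mul_surfactantFlux (hσ : ContDiff ℝ 2 σ)
    (hΓ : ContDiff ℝ ∞ (uncurry Γ))
    (hΦ'' : ∀ s : ℝ, 0 < s → iteratedDeriv 2 Φ s = -deriv σ s / s) {x : ℝ} (hΓx : 0 < Γ t x) :
    iteratedDeriv 2 Φ (Γ t x) * partialX Γ t x * surfactantFlux σ h Γ t x =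
      -(partialX (surfaceTension σ Γ) t x
        * (h t x ^ 2 / 2 * partialX^[3] h t x + h t x * partialX (surfaceTension σ Γ) t x)) := by
  simp only [surfactantFlux, hΦ'' _ hΓx, partialX_surfaceTension hσ hΓ]
  field_simp

theorem dissipation_eq (hL : 0 ≤ L) (hσ : ContDiff ℝ 2 σ) (hh : ContDiff ℝ ∞ (uncurry h))
    (hΓ : ContDiff ℝ ∞ (uncurry Γ)) (hh0 : ∀ x ∈ Icc 0 L, 0 ≤ h t x) :
    dissipation D σ Φ h Γ L t =
      -(∫ x in (0 : ℝ)..L, partialX^[3] h t x * heightFlux σ h Γ t x)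
        - (∫ x in (0 : ℝ)..L, partialX (surfaceTension σ Γ) t x
          * (h t x ^ 2 / 2 * partialX^[3] h t x + h t x * partialX (surfaceTension σ Γ) t x))
        - D * ∫ x in (0 : ℝ)..L, iteratedDeriv 2 Φ (Γ t x) * partialX Γ t x ^ 2 := by
  have hS := (contDiff_uncurry_partialX_surfaceTension hσ hΓ).continuous.uncurry_left t
  have hh3 := (hh.uncurry_iterate_partialX 3).continuous.uncurry_left t
  have hF1 := (contDiff_uncurry_heightFlux hσ hh hΓ).continuous.uncurry_left t
  have hsplit : ∫ x in (0 : ℝ)..L, (partialX^[3] h t x * (h t x ^ 3 / 3 * partialX^[3] h t x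
        + h t x ^ 2 / 2 * partialX (surfaceTension σ Γ) t x) + partialX (surfaceTension σ Γ) t x
        * (h t x ^ 2 / 2 * partialX^[3] h t x + h t x * partialX (surfaceTension σ Γ) t x)) =
      (∫ x in (0 : ℝ)..L, partialX^[3] h t x * heightFlux σ h Γ t x)
        + ∫ x in (0 : ℝ)..L, partialX (surfaceTension σ Γ) t x
          * (h t x ^ 2 / 2 * partialX^[3] h t x + h t x * partialX (surfaceTension σ Γ) t x) :=
    intervalIntegral.integral_add ((hh3.mul hF1).intervalIntegrable 0 L)
      (Continuous.intervalIntegrable (by fun_prop) 0 L)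
  have hsq := integral_mul_flux_add_mul_flux_eq_sum_sq hL (hh.continuous.uncurry_left t) hh3 hS hh0
  rw [dissipation]
  linarith

theorem integral_energy_rate_eq_dissipation (hL : 0 ≤ L) (hσ : ContDiff ℝ 2 σ)
    (hh : ContDiff ℝ ∞ (uncurry h)) (hΓ : ContDiff ℝ ∞ (uncurry Γ))
    (hh0 : ∀ x ∈ Icc 0 L, 0 ≤ h t x) (hΓ0 : ∀ x ∈ Icc 0 L, 0 < Γ t x)
    (hpde1 : ∀ x ∈ Ioo 0 L, partialT h t x + partialX (heightFlux σ h Γ) t x = 0)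
    (hpde2 : ∀ x ∈ Ioo 0 L,
      partialT Γ t x + partialX (surfactantFlux σ h Γ) t x = D * partialX^[2] Γ t x)
    (hbc : ∀ x ∈ ({0, L} : Set ℝ),
      partialX h t x = 0 ∧ partialX^[3] h t x = 0 ∧ partialX Γ t x = 0)
    (hΦ : ContDiffOn ℝ 2 Φ (Ioi 0))
    (hΦ'' : ∀ s : ℝ, 0 < s → iteratedDeriv 2 Φ s = -deriv σ s / s) :
    ∫ x in (0 : ℝ)..L, (partialX h t x * partialT (partialX h) t x
      + deriv Φ (Γ t x) * partialT Γ t x) = dissipation D σ Φ h Γ L t := by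
  obtain ⟨hhx0, hh30, hΓx0⟩ := hbc 0 (by simp)
  obtain ⟨hhxL, hh3L, hΓxL⟩ := hbc L (by simp)
  have hflux0 := heightFlux_eq_zero_and_surfactantFlux_eq_zero hσ hΓ hh30 hΓx0
  have hfluxL := heightFlux_eq_zero_and_surfactantFlux_eq_zero hσ hΓ hh3L hΓxL
  have hhx := hh.uncurry_partialX (m := ∞) (by simp)
  have hΦΓ : ContinuousOn (fun x => deriv Φ (Γ t x)) (uIcc 0 L) :=
    (hΦ.continuousOn_deriv_of_isOpen isOpen_Ioi one_le_two).comp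
      (hΓ.continuous.uncurry_left t).continuousOn fun x hx => hΓ0 x (by rwa [uIcc_of_le hL] at hx)
  rw [intervalIntegral.integral_add
      (((hhx.continuous.uncurry_left t).fun_mul ((hhx.uncurry_partialT (m := ∞)
        (by simp)).continuous.uncurry_left t)).intervalIntegrable 0 L)
      (hΦΓ.fun_mul ((hΓ.uncurry_partialT (m := ∞) (by simp)).continuous.uncurry_left t
        ).continuousOn).intervalIntegrable,
    integral_partialX_mul_partialT_partialX hL hh (contDiff_uncurry_heightFlux hσ hh hΓ)
      hpde1 hhx0 hhxL hflux0.1 hfluxL.1,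
    integral_deriv_comp_mul_partialT hL hΓ (contDiff_uncurry_surfactantFlux hσ hh hΓ) hΦ
      isOpen_Ioi hΓ0 hpde2 hΓx0 hΓxL hflux0.2 hfluxL.2,
    intervalIntegral.integral_congr fun x hx =>
      iteratedDeriv_two_mul_partialX_mul_surfactantFlux hσ hΓ hΦ''
        (hΓ0 x (by rwa [uIcc_of_le hL] at hx)),
    intervalIntegral.integral_neg, dissipation_eq hL hσ hh hΓ hh0]
  ring

theorem dissipation_nonpos (hL : 0 ≤ L) (hD : 0 ≤ D) (hh0 : ∀ x ∈ Icc 0 L, 0 ≤ h t x)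
    (hΦ0 : ∀ x ∈ Icc 0 L, 0 ≤ iteratedDeriv 2 Φ (Γ t x)) : dissipation D σ Φ h Γ L t ≤ 0 := by
  have hI : ∀ {f : ℝ → ℝ}, (∀ x ∈ Icc 0 L, 0 ≤ f x) → 0 ≤ ∫ x in (0 : ℝ)..L, f x :=
    intervalIntegral.integral_nonneg hL
  rw [dissipation]
  refine (sub_le_self _ (mul_nonneg hD (hI fun x hx => mul_nonneg (hΦ0 x hx) (sq_nonneg _)))).trans
    ((sub_le_self _ (mul_nonneg (by norm_num) (hI fun x hx => mul_nonneg (hh0 x hx)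
      (sq_nonneg _)))).trans ((sub_le_self _ (mul_nonneg (by norm_num) (hI fun x hx =>
      mul_nonneg (pow_nonneg (hh0 x hx) 3) (sq_nonneg _)))).trans ((sub_le_self _
      (mul_nonneg (by norm_num) (hI fun _ _ => sq_nonneg _))).trans
      (mul_nonpos_of_nonpos_of_nonneg (by norm_num) (hI fun _ _ => sq_nonneg _)))))

end ThinFilm

theorem stmt_10_general (L T D : ℝ) (hL : 0 < L) (hD : 0 < D)
    (σ : ℝ → ℝ) (hσ : ContDiff ℝ 2 σ)
    (h Γ : ℝ → ℝ → ℝ)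
    (hh : ContDiff ℝ (⊤ : ℕ∞) (fun p : ℝ × ℝ => h p.1 p.2))
    (hΓ : ContDiff ℝ (⊤ : ℕ∞) (fun p : ℝ × ℝ => Γ p.1 p.2))
    (hpos : ∀ t ∈ Icc 0 T, ∀ x ∈ Icc 0 L, 0 < h t x ∧ 0 < Γ t x)
    (heq1 : ∀ t ∈ Ioo 0 T, ∀ x ∈ Ioo 0 L,
      deriv (fun s => h s x) t
        + deriv (fun y => (h t y) ^ 3 / 3 * iteratedDeriv 3 (h t) y
            + (h t y) ^ 2 / 2 * deriv (fun z => σ (Γ t z)) y) x = 0)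
    (heq2 : ∀ t ∈ Ioo 0 T, ∀ x ∈ Ioo 0 L,
      deriv (fun s => Γ s x) t
        + deriv (fun y => (h t y) ^ 2 / 2 * Γ t y * iteratedDeriv 3 (h t) y
            + h t y * Γ t y * deriv (fun z => σ (Γ t z)) y) x
        = D * iteratedDeriv 2 (Γ t) x)
    (hbc : ∀ t ∈ Icc 0 T, ∀ x ∈ ({0, L} : Set ℝ),
      deriv (h t) x = 0 ∧ iteratedDeriv 3 (h t) x = 0 ∧ deriv (Γ t) x = 0)
    (Φ : ℝ → ℝ) (hΦ : ContDiffOn ℝ 2 Φ (Ioi 0))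
    (hΦ'' : ∀ s : ℝ, 0 < s → iteratedDeriv 2 Φ s = -(deriv σ s) / s) :
    (∀ t ∈ Ioo 0 T,
      HasDerivAt (fun τ => ∫ x in (0:ℝ)..L, ((deriv (h τ) x) ^ 2 / 2 + Φ (Γ τ x)))
        (-(3 / 2) * (∫ x in (0:ℝ)..L,
            ((h t x) ^ ((3:ℝ)/2) / 3 * iteratedDeriv 3 (h t) x
              + (h t x) ^ ((1:ℝ)/2) / 2 * deriv (fun z => σ (Γ t z)) x) ^ 2)
          - (1 / 2) * (∫ x in (0:ℝ)..L,
            ((h t x) ^ ((3:ℝ)/2) / 2 * iteratedDeriv 3 (h t) x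
              + (h t x) ^ ((1:ℝ)/2) * deriv (fun z => σ (Γ t z)) x) ^ 2)
          - (1 / 24) * (∫ x in (0:ℝ)..L,
              (h t x) ^ 3 * (iteratedDeriv 3 (h t) x) ^ 2)
          - (1 / 8) * (∫ x in (0:ℝ)..L,
              h t x * (deriv (fun z => σ (Γ t z)) x) ^ 2)
          - D * (∫ x in (0:ℝ)..L,
              iteratedDeriv 2 Φ (Γ t x) * (deriv (Γ t) x) ^ 2)) t) ∧
    ((∀ s : ℝ, 0 < s → deriv σ s ≤ 0) →
      AntitoneOn (fun τ => ∫ x in (0:ℝ)..L, ((deriv (h τ) x) ^ 2 / 2 + Φ (Γ τ x)))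
        (Ioo 0 T)) := by
  simp only [iteratedDeriv_eq_iterate_partialX] at heq1 heq2 hbc ⊢
  have hderiv : ∀ t ∈ Ioo 0 T, HasDerivAt (energy Φ h Γ L) (dissipation D σ Φ h Γ L t) t := by
    intro t ht
    have ht' := Ioo_subset_Icc_self ht
    rw [← integral_energy_rate_eq_dissipation hL.le hσ hh hΓ (fun x hx => (hpos t ht' x hx).1.le)
      (fun x hx => (hpos t ht' x hx).2) (heq1 t ht) (heq2 t ht) (hbc t ht') hΦ hΦ'']
    exact hasDerivAt_energy hL.le hh hΓ (hΦ.of_le one_le_two)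
      (fun τ hτ x hx => (hpos τ hτ x hx).2) ht
  refine ⟨hderiv, fun hσ' => antitoneOn_of_hasDerivWithinAt_nonpos (convex_Ioo 0 T)
    (f' := dissipation D σ Φ h Γ L) (fun t ht => (hderiv t ht).continuousAt.continuousWithinAt)
    ?_ ?_⟩ <;> rw [interior_Ioo]
  · exact fun t ht => (hderiv t ht).hasDerivWithinAt
  · intro t ht
    have ht' := Ioo_subset_Icc_self ht
    refine dissipation_nonpos hL.le hD.le (fun x hx => (hpos t ht' x hx).1.le) fun x hx => ?_
    have hΓx := (hpos t ht' x hx).2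
    rw [hΦ'' _ hΓx]
    exact div_nonneg (neg_nonneg.2 (hσ' _ hΓx)) hΓx.le

/-- Dissipation identity for the energy
`E(t) = ∫₀ᴸ (1/2)(∂ₓh)² + Φ(Γ) dx` along positive classical solutions of the
thin film system with insoluble surfactant, where `Φ″(s) = −σ′(s)/s` on
`(0,∞)`; in particular `E` is nonincreasing on `(0,T)` when `σ′ ≤ 0`. -/
theorem stmt_10 (L T D : ℝ) (hL : 0 < L) (hT : 0 < T) (hD : 0 < D)
    (σ : ℝ → ℝ) (hσ : ContDiff ℝ 2 σ)
    (h Γ : ℝ → ℝ → ℝ)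
    (hh : ContDiff ℝ (⊤ : ℕ∞) (fun p : ℝ × ℝ => h p.1 p.2))
    (hΓ : ContDiff ℝ (⊤ : ℕ∞) (fun p : ℝ × ℝ => Γ p.1 p.2))
    (hpos : ∀ t ∈ Icc 0 T, ∀ x ∈ Icc 0 L, 0 < h t x ∧ 0 < Γ t x)
    (heq1 : ∀ t ∈ Ioo 0 T, ∀ x ∈ Ioo 0 L,
      deriv (fun s => h s x) t
        + deriv (fun y => (h t y) ^ 3 / 3 * iteratedDeriv 3 (h t) y
            + (h t y) ^ 2 / 2 * deriv (fun z => σ (Γ t z)) y) x = 0)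
    (heq2 : ∀ t ∈ Ioo 0 T, ∀ x ∈ Ioo 0 L,
      deriv (fun s => Γ s x) t
        + deriv (fun y => (h t y) ^ 2 / 2 * Γ t y * iteratedDeriv 3 (h t) y
            + h t y * Γ t y * deriv (fun z => σ (Γ t z)) y) x
        = D * iteratedDeriv 2 (Γ t) x)
    (hbc : ∀ t ∈ Icc 0 T, ∀ x ∈ ({0, L} : Set ℝ),
      deriv (h t) x = 0 ∧ iteratedDeriv 3 (h t) x = 0 ∧ deriv (Γ t) x = 0)
    (Φ : ℝ → ℝ) (hΦ : ContDiffOn ℝ 2 Φ (Ioi 0))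
    (hΦ'' : ∀ s : ℝ, 0 < s → iteratedDeriv 2 Φ s = -(deriv σ s) / s) :
    (∀ t ∈ Ioo 0 T,
      HasDerivAt (fun τ => ∫ x in (0:ℝ)..L, ((deriv (h τ) x) ^ 2 / 2 + Φ (Γ τ x)))
        (-(3 / 2) * (∫ x in (0:ℝ)..L,
            ((h t x) ^ ((3:ℝ)/2) / 3 * iteratedDeriv 3 (h t) x
              + (h t x) ^ ((1:ℝ)/2) / 2 * deriv (fun z => σ (Γ t z)) x) ^ 2)
          - (1 / 2) * (∫ x in (0:ℝ)..L,
            ((h t x) ^ ((3:ℝ)/2) / 2 * iteratedDeriv 3 (h t) x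
              + (h t x) ^ ((1:ℝ)/2) * deriv (fun z => σ (Γ t z)) x) ^ 2)
          - (1 / 24) * (∫ x in (0:ℝ)..L,
              (h t x) ^ 3 * (iteratedDeriv 3 (h t) x) ^ 2)
          - (1 / 8) * (∫ x in (0:ℝ)..L,
              h t x * (deriv (fun z => σ (Γ t z)) x) ^ 2)
          - D * (∫ x in (0:ℝ)..L,
              iteratedDeriv 2 Φ (Γ t x) * (deriv (Γ t) x) ^ 2)) t) ∧
    ((∀ s : ℝ, 0 < s → deriv σ s ≤ 0) →
      AntitoneOn (fun τ => ∫ x in (0:ℝ)..L, ((deriv (h τ) x) ^ 2 / 2 + Φ (Γ τ x)))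
        (Ioo 0 T)) :=
  stmt_10_general L T D hL hD σ hσ h Γ hh hΓ hpos heq1 heq2 hbc Φ hΦ hΦ''
end

section
/- Let L > 0, 𝒟 > 0, and σ ∈ C²(ℝ) with σ′(s) ≤ 0 for all s ≥ 0. Suppose h ∈ C⁴([0,L]) and Γ ∈ C²([0,L]) satisfy h(x) > 0 and Γ(x) > 0 for all x ∈ [0,L], the steady equations ((h³/3)h‴ + (h²/2)σ′(Γ)Γ′)′ = 0 and ((h²/2)Γh‴ + hΓσ′(Γ)Γ′)′ = 𝒟Γ″ on [0,L], and the boundary conditions h′(0) = h′(L) = h‴(0) = h‴(L) = Γ′(0) = Γ′(L) = 0. Then h and Γ are constant functions on [0,L]. (Every positive equilibrium of the thin film system with insoluble surfactant is flat.) -/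
/-!
Both fluxes have vanishing derivative on `[0,L]` and vanish at `x = 0` by the boundary
conditions, so `F₁ = F₂ = 0` on `[0,L]`. Eliminating `h‴` from these two identities gives
`(hΓσ′(Γ)/4 - 𝒟) Γ′ = 0`, whose coefficient is negative since `σ′ ≤ 0`; hence `Γ′ = 0`, and
then `F₁ = 0` forces `h‴ = 0`. So `h″` is constant; by Rolle it vanishes somewhere between the
zeros of `h′` at the endpoints, hence everywhere, and `h′ = h′(0) = 0`.
-/

open Set

namespace ThinFilm

noncomputable def flux₁ (σ h Γ : ℝ → ℝ) (y : ℝ) : ℝ :=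
  h y ^ 3 / 3 * iteratedDeriv 3 h y + h y ^ 2 / 2 * deriv σ (Γ y) * deriv Γ y

noncomputable def flux₂ (D : ℝ) (σ h Γ : ℝ → ℝ) (y : ℝ) : ℝ :=
  (h y ^ 2 / 2 * Γ y * iteratedDeriv 3 h y + h y * Γ y * deriv σ (Γ y) * deriv Γ y)
    - D * deriv Γ y

theorem eq_left_of_deriv_eq_zero_on_Icc {f : ℝ → ℝ} {a b : ℝ} (hf : Differentiable ℝ f)
    (hf' : ∀ x ∈ Icc a b, deriv f x = 0) : ∀ x ∈ Icc a b, f x = f a :=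
  constant_of_has_deriv_right_zero hf.continuous.continuousOn fun x hx =>
    (hf' x (Ico_subset_Icc_self hx) ▸ (hf x).hasDerivAt).hasDerivWithinAt

theorem eq_zero_of_flux_eq_zero {a g s D t p : ℝ} (ha : 0 < a) (hg : 0 ≤ g) (hs : s ≤ 0)
    (hD : 0 < D) (h₁ : a ^ 3 / 3 * t + a ^ 2 / 2 * s * p = 0)
    (h₂ : a ^ 2 / 2 * g * t + a * g * s * p - D * p = 0) : p = 0 ∧ t = 0 := by
  have hp : (a ^ 2 * g * s / 4 - a * D) * p = 0 := by linear_combination a * h₂ - 3 * g / 2 * h₁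
  have hcoeff : a ^ 2 * g * s / 4 - a * D < 0 := by
    nlinarith [mul_nonpos_of_nonneg_of_nonpos (mul_nonneg (sq_nonneg a) hg) hs, mul_pos ha hD]
  have hp0 : p = 0 := (mul_eq_zero.mp hp).resolve_left hcoeff.ne
  refine ⟨hp0, ?_⟩
  subst hp0
  have : a ^ 3 / 3 ≠ 0 := by positivity
  simpa [this] using h₁

theorem differentiable_flux_ingredients {σ h Γ : ℝ → ℝ} (hσ : ContDiff ℝ 2 σ)
    (hh : ContDiff ℝ 4 h) (hΓ : ContDiff ℝ 2 Γ) :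
    Differentiable ℝ h ∧ Differentiable ℝ (iteratedDeriv 3 h) ∧ Differentiable ℝ Γ ∧
      Differentiable ℝ (deriv Γ) ∧ Differentiable ℝ (deriv σ) := by
  rw [← iteratedDeriv_one, ← iteratedDeriv_one]
  exact ⟨hh.differentiable (by norm_num), hh.differentiable_iteratedDeriv 3 (by norm_num),
    hΓ.differentiable (by norm_num), hΓ.differentiable_iteratedDeriv 1 (by norm_num),
    hσ.differentiable_iteratedDeriv 1 (by norm_num)⟩

theorem differentiable_flux₁ {σ h Γ : ℝ → ℝ} (hσ : ContDiff ℝ 2 σ) (hh : ContDiff ℝ 4 h)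
    (hΓ : ContDiff ℝ 2 Γ) : Differentiable ℝ (flux₁ σ h Γ) := by
  obtain ⟨_, _, _, _, _⟩ := differentiable_flux_ingredients hσ hh hΓ
  unfold flux₁
  fun_prop

theorem differentiable_flux₂ {σ h Γ : ℝ → ℝ} (D : ℝ) (hσ : ContDiff ℝ 2 σ) (hh : ContDiff ℝ 4 h)
    (hΓ : ContDiff ℝ 2 Γ) : Differentiable ℝ (flux₂ D σ h Γ) := by
  obtain ⟨_, _, _, _, _⟩ := differentiable_flux_ingredients hσ hh hΓ
  unfold flux₂
  fun_prop

theorem deriv_flux₂ {σ h Γ : ℝ → ℝ} (D : ℝ) (hσ : ContDiff ℝ 2 σ) (hh : ContDiff ℝ 4 h)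
    (hΓ : ContDiff ℝ 2 Γ) (x : ℝ) :
    deriv (flux₂ D σ h Γ) x = deriv (fun y => h y ^ 2 / 2 * Γ y * iteratedDeriv 3 h y
        + h y * Γ y * deriv σ (Γ y) * deriv Γ y) x - D * iteratedDeriv 2 Γ x := by
  obtain ⟨_, _, _, hΓ₁, _⟩ := differentiable_flux_ingredients hσ hh hΓ
  rw [show iteratedDeriv 2 Γ x = deriv (deriv Γ) x by simp [iteratedDeriv_succ],
    ← deriv_const_mul D (hΓ₁ x)]
  exact deriv_fun_sub (by fun_prop) (by fun_prop)

theorem deriv_eq_zero_of_iteratedDeriv_three_eq_zero {h : ℝ → ℝ} {a b : ℝ} (hab : a < b)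
    (hh : ContDiff ℝ 3 h) (h₃ : ∀ x ∈ Icc a b, iteratedDeriv 3 h x = 0)
    (ha : deriv h a = 0) (hb : deriv h b = 0) : ∀ x ∈ Icc a b, deriv h x = 0 := by
  have hh₁ : Differentiable ℝ (deriv h) := by
    simpa [iteratedDeriv_one] using hh.differentiable_iteratedDeriv 1 (by norm_num)
  have hh₂ : Differentiable ℝ (deriv (deriv h)) := by
    simpa [iteratedDeriv_succ] using hh.differentiable_iteratedDeriv 2 (by norm_num)
  have h₂_const := eq_left_of_deriv_eq_zero_on_Icc hh₂ (by simpa [iteratedDeriv_succ] using h₃)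
  obtain ⟨c, hc, hc₀⟩ := exists_deriv_eq_zero hab hh₁.continuous.continuousOn (ha.trans hb.symm)
  have h₂ : ∀ x ∈ Icc a b, deriv (deriv h) x = 0 := fun x hx => by
    rw [h₂_const x hx, ← h₂_const c (Ioo_subset_Icc_self hc), hc₀]
  exact fun x hx => (eq_left_of_deriv_eq_zero_on_Icc hh₁ h₂ x hx).trans ha

end ThinFilm

open ThinFilm in
theorem stmt_11_general (L D : ℝ) (hL : 0 < L) (hD : 0 < D)
    (σ : ℝ → ℝ) (hσ : ContDiff ℝ 2 σ) (hσ' : ∀ s : ℝ, 0 ≤ s → deriv σ s ≤ 0)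
    (h Γ : ℝ → ℝ) (hh : ContDiff ℝ 4 h) (hΓ : ContDiff ℝ 2 Γ)
    (hpos : ∀ x ∈ Icc 0 L, 0 < h x ∧ 0 < Γ x)
    (heq1 : ∀ x ∈ Icc 0 L,
      deriv (fun y => (h y) ^ 3 / 3 * iteratedDeriv 3 h y
        + (h y) ^ 2 / 2 * deriv σ (Γ y) * deriv Γ y) x = 0)
    (heq2 : ∀ x ∈ Icc 0 L,
      deriv (fun y => (h y) ^ 2 / 2 * Γ y * iteratedDeriv 3 h y
        + h y * Γ y * deriv σ (Γ y) * deriv Γ y) x = D * iteratedDeriv 2 Γ x)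
    (hbc1 : deriv h 0 = 0) (hbc2 : deriv h L = 0)
    (hbc3 : iteratedDeriv 3 h 0 = 0)
    (hbc5 : deriv Γ 0 = 0) :
    ∀ x ∈ Icc 0 L, ∀ y ∈ Icc 0 L, h x = h y ∧ Γ x = Γ y := by
  have hF₁ : ∀ x ∈ Icc 0 L, flux₁ σ h Γ x = 0 := fun x hx =>
    (eq_left_of_deriv_eq_zero_on_Icc (differentiable_flux₁ hσ hh hΓ) heq1 x hx).trans
      (by simp [flux₁, hbc3, hbc5])
  have hF₂ : ∀ x ∈ Icc 0 L, flux₂ D σ h Γ x = 0 := fun x hx =>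
    (eq_left_of_deriv_eq_zero_on_Icc (differentiable_flux₂ D hσ hh hΓ)
      (fun y hy => by rw [deriv_flux₂ D hσ hh hΓ, heq2 y hy, sub_self]) x hx).trans
      (by simp [flux₂, hbc3, hbc5])
  have hflat : ∀ x ∈ Icc 0 L, deriv Γ x = 0 ∧ iteratedDeriv 3 h x = 0 := fun x hx =>
    eq_zero_of_flux_eq_zero (hpos x hx).1 (hpos x hx).2.le (hσ' _ (hpos x hx).2.le) hD
      (hF₁ x hx) (hF₂ x hx)
  have hdh := deriv_eq_zero_of_iteratedDeriv_three_eq_zero hL (hh.of_le (by norm_num))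
    (fun x hx => (hflat x hx).2) hbc1 hbc2
  have hh_const := eq_left_of_deriv_eq_zero_on_Icc (hh.differentiable (by norm_num)) hdh
  have hΓ_const := eq_left_of_deriv_eq_zero_on_Icc (hΓ.differentiable (by norm_num))
    fun x hx => (hflat x hx).1
  intro x hx y hy
  exact ⟨(hh_const x hx).trans (hh_const y hy).symm, (hΓ_const x hx).trans (hΓ_const y hy).symm⟩

/-- Every positive equilibrium of the thin film system with insoluble
surfactant is flat: if `(h, Γ)` is positive on `[0,L]`, solves the steady
equations `((h³/3)h‴ + (h²/2)σ′(Γ)Γ′)′ = 0` and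
`((h²/2)Γh‴ + hΓσ′(Γ)Γ′)′ = 𝒟Γ″` on `[0,L]` with no-flux boundary conditions,
then `h` and `Γ` are constant on `[0,L]`. -/
theorem stmt_11 (L D : ℝ) (hL : 0 < L) (hD : 0 < D)
    (σ : ℝ → ℝ) (hσ : ContDiff ℝ 2 σ) (hσ' : ∀ s : ℝ, 0 ≤ s → deriv σ s ≤ 0)
    (h Γ : ℝ → ℝ) (hh : ContDiff ℝ 4 h) (hΓ : ContDiff ℝ 2 Γ)
    (hpos : ∀ x ∈ Icc 0 L, 0 < h x ∧ 0 < Γ x)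
    (heq1 : ∀ x ∈ Icc 0 L,
      deriv (fun y => (h y) ^ 3 / 3 * iteratedDeriv 3 h y
        + (h y) ^ 2 / 2 * deriv σ (Γ y) * deriv Γ y) x = 0)
    (heq2 : ∀ x ∈ Icc 0 L,
      deriv (fun y => (h y) ^ 2 / 2 * Γ y * iteratedDeriv 3 h y
        + h y * Γ y * deriv σ (Γ y) * deriv Γ y) x = D * iteratedDeriv 2 Γ x)
    (hbc1 : deriv h 0 = 0) (hbc2 : deriv h L = 0)
    (hbc3 : iteratedDeriv 3 h 0 = 0) (hbc4 : iteratedDeriv 3 h L = 0)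
    (hbc5 : deriv Γ 0 = 0) (hbc6 : deriv Γ L = 0) :
    ∀ x ∈ Icc 0 L, ∀ y ∈ Icc 0 L, h x = h y ∧ Γ x = Γ y :=
  stmt_11_general L D hL hD σ hσ hσ' h Γ hh hΓ hpos heq1 heq2 hbc1 hbc2 hbc3 hbc5
end

section
/- Let L > 0, T > 0, h* > 0, Γ* ≥ 0, 𝒟 > 0, s ∈ ℝ, and q > 0. Let z₁, z₂ : [0,T] × [0,L] → ℝ be smooth functions satisfying the linearized system ∂ₜz₁ + (h*³/3)∂ₓ⁴z₁ + (h*²/2)s·∂ₓ²z₂ = 0 and ∂ₜz₂ + (h*²/2)Γ*·∂ₓ⁴z₁ + (h*Γ*s − 𝒟)∂ₓ²z₂ = 0 on (0,T) × (0,L), together with the boundary conditions ∂ₓz₁ = ∂ₓ³z₁ = ∂ₓz₂ = 0 at x = 0 and x = L for all t. Then for every t ∈ (0,T): (1/2)·d/dt [ q∫₀ᴸ(∂ₓz₁)² dx + h*∫₀ᴸ z₂² dx ] = −(q h*³/3)∫₀ᴸ(∂ₓ³z₁)² dx + ((h*³Γ* − q h*² s)/2)∫₀ᴸ ∂ₓ³z₁·∂ₓz₂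 dx − h*(𝒟 − h*Γ*s)∫₀ᴸ(∂ₓz₂)² dx. -/
open Set

open MeasureTheory intervalIntegral

lemma wt_add_one_le : ((⊤:ℕ∞) : WithTop ℕ∞) + 1 ≤ ((⊤:ℕ∞) : WithTop ℕ∞) := le_of_eq rfl
lemma wt_one_le : (1 : WithTop ℕ∞) ≤ ((⊤:ℕ∞) : WithTop ℕ∞) := by
  simpa using WithTop.coe_le_coe.mpr (le_top : (1:ℕ∞) ≤ ⊤)
lemma wt_two_le : (2 : WithTop ℕ∞) ≤ ((⊤:ℕ∞) : WithTop ℕ∞) := by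
  simpa using WithTop.coe_le_coe.mpr (le_top : (2:ℕ∞) ≤ ⊤)

noncomputable def px (G : ℝ × ℝ → ℝ) : ℝ × ℝ → ℝ := fun p => fderiv ℝ G p (0, 1)
noncomputable def pt (G : ℝ × ℝ → ℝ) : ℝ × ℝ → ℝ := fun p => fderiv ℝ G p (1, 0)

lemma contDiff_papp {G : ℝ × ℝ → ℝ} (v : ℝ × ℝ) (hG : ContDiff ℝ (⊤ : ℕ∞) G) :
    ContDiff ℝ (⊤ : ℕ∞) (fun p => fderiv ℝ G p v) :=
  (hG.fderiv_right wt_add_one_le).clm_apply contDiff_const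

lemma contDiff_px {G : ℝ × ℝ → ℝ} (hG : ContDiff ℝ (⊤ : ℕ∞) G) : ContDiff ℝ (⊤ : ℕ∞) (px G) :=
  contDiff_papp _ hG

lemma contDiff_pt {G : ℝ × ℝ → ℝ} (hG : ContDiff ℝ (⊤ : ℕ∞) G) : ContDiff ℝ (⊤ : ℕ∞) (pt G) :=
  contDiff_papp _ hG

lemma hasDerivAt_px {G : ℝ × ℝ → ℝ} (hG : Differentiable ℝ G) (t x : ℝ) :
    HasDerivAt (fun y => G (t, y)) (px G (t, x)) x := by
  have h := (hG (t, x)).hasFDerivAt.comp_hasDerivAt x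
    ((hasDerivAt_const x t).prodMk (hasDerivAt_id x))
  exact h

lemma hasDerivAt_pt {G : ℝ × ℝ → ℝ} (hG : Differentiable ℝ G) (t x : ℝ) :
    HasDerivAt (fun τ => G (τ, x)) (pt G (t, x)) t := by
  have h := (hG (t, x)).hasFDerivAt.comp_hasDerivAt t
    ((hasDerivAt_id t).prodMk (hasDerivAt_const t x))
  exact h

lemma deriv_eq_px {G : ℝ × ℝ → ℝ} (hG : Differentiable ℝ G) (t x : ℝ) :
    deriv (fun y => G (t, y)) x = px G (t, x) := (hasDerivAt_px hG t x).deriv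

lemma pt_px_comm {G : ℝ × ℝ → ℝ} (hG : ContDiff ℝ (⊤ : ℕ∞) G) (p : ℝ × ℝ) :
    pt (px G) p = px (pt G) p := by
  have hsymm : IsSymmSndFDerivAt ℝ G p :=
    hG.contDiffAt.isSymmSndFDerivAt (by simpa using wt_two_le)
  have key : ∀ v w : ℝ × ℝ,
      fderiv ℝ (fun q => fderiv ℝ G q v) p w = fderiv ℝ (fderiv ℝ G) p w v := by
    intro v w
    have hA : HasFDerivAt (fderiv ℝ G) (fderiv ℝ (fderiv ℝ G) p) p :=
      (((hG.fderiv_right wt_add_one_le).differentiable (by simp)) p).hasFDerivAt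
    have h2 : HasFDerivAt (fun q => fderiv ℝ G q v)
        ((ContinuousLinearMap.apply ℝ ℝ v).comp (fderiv ℝ (fderiv ℝ G) p)) p :=
      ((ContinuousLinearMap.apply ℝ ℝ v).hasFDerivAt).comp p hA
    rw [h2.fderiv]
    simp
  calc pt (px G) p = fderiv ℝ (fderiv ℝ G) p (1, 0) (0, 1) := key (0, 1) (1, 0)
    _ = fderiv ℝ (fderiv ℝ G) p (0, 1) (1, 0) := hsymm.eq _ _
    _ = px (pt G) p := (key (1, 0) (0, 1)).symm

lemma iteratedDeriv_eq_px {G : ℝ × ℝ → ℝ} (hG : ContDiff ℝ (⊤ : ℕ∞) G) (n : ℕ) (t x : ℝ) :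
    iteratedDeriv n (fun y => G (t, y)) x = (px^[n] G) (t, x) := by
  induction n generalizing x with
  | zero => simp
  | succ n ih =>
    rw [iteratedDeriv_succ]
    have hfun : iteratedDeriv n (fun y => G (t, y)) = fun x => (px^[n] G) (t, x) :=
      funext fun x => ih x
    rw [hfun, Function.iterate_succ']
    have hcd : ContDiff ℝ (⊤ : ℕ∞) (px^[n] G) := by
      clear hfun ih
      induction n with
      | zero => simpa using hG
      | succ n ih2 => rw [Function.iterate_succ']; exact contDiff_px ih2
    exact deriv_eq_px (hcd.differentiable (by simp)) t x

lemma iter2 {α : Type*} (f : α → α) (a : α) : f^[2] a = f (f a) := by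
  rw [show (2:ℕ) = 1 + 1 from rfl, Function.iterate_succ_apply', Function.iterate_one]

lemma iter3 {α : Type*} (f : α → α) (a : α) : f^[3] a = f (f (f a)) := by
  rw [show (3:ℕ) = 2 + 1 from rfl, Function.iterate_succ_apply', iter2]

lemma iter4 {α : Type*} (f : α → α) (a : α) : f^[4] a = f (f (f (f a))) := by
  rw [show (4:ℕ) = 3 + 1 from rfl, Function.iterate_succ_apply', iter3]


theorem aux_main (L T hstar Γstar D s q t : ℝ)
    (hL : 0 < L) (ht : t ∈ Ioo 0 T)
    (Z1 Z2 : ℝ × ℝ → ℝ)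
    (hz1 : ContDiff ℝ (⊤ : ℕ∞) Z1) (hz2 : ContDiff ℝ (⊤ : ℕ∞) Z2)
    (heq1 : ∀ x ∈ Ioo 0 L, pt Z1 (t, x)
      + hstar ^ 3 / 3 * px (px (px (px Z1))) (t, x)
      + hstar ^ 2 / 2 * s * px (px Z2) (t, x) = 0)
    (heq2 : ∀ x ∈ Ioo 0 L, pt Z2 (t, x)
      + hstar ^ 2 / 2 * Γstar * px (px (px (px Z1))) (t, x)
      + (hstar * Γstar * s - D) * px (px Z2) (t, x) = 0)
    (hbc : ∀ x ∈ ({0, L} : Set ℝ),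
      px Z1 (t, x) = 0 ∧ px (px (px Z1)) (t, x) = 0 ∧ px Z2 (t, x) = 0) :
    ∃ V' : ℝ,
      HasDerivAt (fun τ => q * (∫ x in (0:ℝ)..L, (px Z1 (τ, x)) ^ 2)
          + hstar * (∫ x in (0:ℝ)..L, (Z2 (τ, x)) ^ 2)) V' t ∧
      1 / 2 * V' =
        -(q * hstar ^ 3 / 3) * (∫ x in (0:ℝ)..L, (px (px (px Z1)) (t, x)) ^ 2)
          + (hstar ^ 3 * Γstar - q * hstar ^ 2 * s) / 2 *
              (∫ x in (0:ℝ)..L, px (px (px Z1)) (t, x) * px Z2 (t, x))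
          - hstar * (D - hstar * Γstar * s) *
              (∫ x in (0:ℝ)..L, (px Z2 (t, x)) ^ 2) := by
  -- basic smoothness facts
  have cA1 : ContDiff ℝ (⊤ : ℕ∞) (px Z1) := contDiff_px hz1
  have cA2 : ContDiff ℝ (⊤ : ℕ∞) (px (px Z1)) := contDiff_px cA1
  have cA3 : ContDiff ℝ (⊤ : ℕ∞) (px (px (px Z1))) := contDiff_px cA2
  have cA4 : ContDiff ℝ (⊤ : ℕ∞) (px (px (px (px Z1)))) := contDiff_px cA3
  have cW1 : ContDiff ℝ (⊤ : ℕ∞) (px Z2) := contDiff_px hz2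
  have cW2 : ContDiff ℝ (⊤ : ℕ∞) (px (px Z2)) := contDiff_px cW1
  have cT1 : ContDiff ℝ (⊤ : ℕ∞) (pt Z1) := contDiff_pt hz1
  have cT2 : ContDiff ℝ (⊤ : ℕ∞) (pt Z2) := contDiff_pt hz2
  have cTA1 : ContDiff ℝ (⊤ : ℕ∞) (pt (px Z1)) := contDiff_pt cA1
  -- slice continuity / integrability
  have contSlice : ∀ (H : ℝ × ℝ → ℝ), Continuous H → ∀ τ : ℝ, Continuous fun x => H (τ, x) :=
    fun H h τ => h.comp (continuous_const.prodMk continuous_id)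
  have iiPQ : ∀ (c : ℝ) (P Q : ℝ × ℝ → ℝ), Continuous P → Continuous Q →
      IntervalIntegrable (fun x => c * (P (t, x) * Q (t, x))) volume 0 L :=
    fun c P Q hP hQ =>
      (continuous_const.mul ((contSlice P hP t).mul (contSlice Q hQ t))).intervalIntegrable 0 L
  -- boundary values at time t
  have hb0 := hbc 0 (by simp)
  have hbL := hbc L (by simp)
  -- integration by parts helper
  have ibp : ∀ (P Q : ℝ × ℝ → ℝ), ContDiff ℝ (⊤ : ℕ∞) P → ContDiff ℝ (⊤ : ℕ∞) Q →
      P (t, 0) * Q (t, 0) = 0 → P (t, L) * Q (t, L) = 0 →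
      (∫ x in (0:ℝ)..L, P (t, x) * px Q (t, x))
        = -∫ x in (0:ℝ)..L, px P (t, x) * Q (t, x) := by
    intro P Q hP hQ h0 hLe
    have h := intervalIntegral.integral_mul_deriv_eq_deriv_mul
      (u := fun x => P (t, x)) (v := fun x => Q (t, x))
      (u' := fun x => px P (t, x)) (v' := fun x => px Q (t, x))
      (fun x _ => hasDerivAt_px (hP.differentiable (by simp)) t x)
      (fun x _ => hasDerivAt_px (hQ.differentiable (by simp)) t x)
      ((contSlice _ (contDiff_px hP).continuous t).intervalIntegrable 0 L)
      ((contSlice _ (contDiff_px hQ).continuous t).intervalIntegrable 0 L)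
    rw [h, h0, hLe]; ring
  -- a.e. congruence helper on (0, L)
  have aeCongr : ∀ (f g : ℝ → ℝ), (∀ x ∈ Ioo 0 L, f x = g x) →
      (∫ x in (0:ℝ)..L, f x) = ∫ x in (0:ℝ)..L, g x := by
    intro f g hfg
    apply intervalIntegral.integral_congr_ae
    have hne : ∀ᵐ x : ℝ, x ≠ L := by
      refine (MeasureTheory.ae_iff).2 ?_
      have he : {x : ℝ | ¬x ≠ L} = {L} := by ext y; simp
      rw [he]; exact measure_singleton L
    filter_upwards [hne] with x hx hmem
    rw [uIoc_of_le hL.le] at hmem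
    exact hfg x ⟨hmem.1, lt_of_le_of_ne hmem.2 hx⟩
  -- named integrals
  set I3 : ℝ := ∫ x in (0:ℝ)..L, px (px (px Z1)) (t, x) * px (px (px Z1)) (t, x) with hI3
  set Imix : ℝ := ∫ x in (0:ℝ)..L, px (px (px Z1)) (t, x) * px Z2 (t, x) with hImix
  set Iw : ℝ := ∫ x in (0:ℝ)..L, px Z2 (t, x) * px Z2 (t, x) with hIw
  -- J integrals via IBP
  have hJ1 : (∫ x in (0:ℝ)..L, px (px Z1) (t, x) * px (px (px (px Z1))) (t, x)) = -I3 := by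
    rw [ibp (px (px Z1)) (px (px (px Z1))) cA2 cA3 (by rw [hb0.2.1]; ring)
      (by rw [hbL.2.1]; ring), hI3]
  have hJ2 : (∫ x in (0:ℝ)..L, px (px Z1) (t, x) * px (px Z2) (t, x)) = -Imix := by
    rw [ibp (px (px Z1)) (px Z2) cA2 cW1 (by rw [hb0.2.2]; ring) (by rw [hbL.2.2]; ring), hImix]
  -- K1
  have hK1 : (∫ x in (0:ℝ)..L, px Z1 (t, x) * pt (px Z1) (t, x))
      = -(-(hstar ^ 3 / 3) * (-I3) + -(hstar ^ 2 / 2 * s) * (-Imix)) := by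
    have step1 : (∫ x in (0:ℝ)..L, px Z1 (t, x) * pt (px Z1) (t, x))
        = ∫ x in (0:ℝ)..L, px Z1 (t, x) * px (pt Z1) (t, x) :=
      intervalIntegral.integral_congr fun x _ => by rw [pt_px_comm hz1]
    rw [step1, ibp (px Z1) (pt Z1) cA1 cT1 (by rw [hb0.1]; ring) (by rw [hbL.1]; ring)]
    have step2 : (∫ x in (0:ℝ)..L, px (px Z1) (t, x) * pt Z1 (t, x))
        = ∫ x in (0:ℝ)..L, (-(hstar ^ 3 / 3) * (px (px Z1) (t, x) * px (px (px (px Z1))) (t, x))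
            + -(hstar ^ 2 / 2 * s) * (px (px Z1) (t, x) * px (px Z2) (t, x))) := by
      apply aeCongr
      intro x hx
      have h := heq1 x hx
      have h2 : pt Z1 (t, x) = -(hstar ^ 3 / 3) * px (px (px (px Z1))) (t, x)
          + -(hstar ^ 2 / 2 * s) * px (px Z2) (t, x) := by linarith
      rw [h2]; ring
    rw [step2, intervalIntegral.integral_add
        (iiPQ _ _ _ cA2.continuous cA4.continuous) (iiPQ _ _ _ cA2.continuous cW2.continuous),
      intervalIntegral.integral_const_mul, intervalIntegral.integral_const_mul, hJ1, hJ2]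
  have hJ3 : (∫ x in (0:ℝ)..L, Z2 (t, x) * px (px (px (px Z1))) (t, x)) = -Imix := by
    rw [ibp Z2 (px (px (px Z1))) hz2 cA3 (by rw [hb0.2.1]; ring) (by rw [hbL.2.1]; ring), hImix]
    congr 1
    exact intervalIntegral.integral_congr fun x _ => mul_comm _ _
  have hJ4 : (∫ x in (0:ℝ)..L, Z2 (t, x) * px (px Z2) (t, x)) = -Iw := by
    rw [ibp Z2 (px Z2) hz2 cW1 (by rw [hb0.2.2]; ring) (by rw [hbL.2.2]; ring), hIw]
  -- K2
  have hK2 : (∫ x in (0:ℝ)..L, Z2 (t, x) * pt Z2 (t, x))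
      = -(hstar ^ 2 / 2 * Γstar) * (-Imix) + -(hstar * Γstar * s - D) * (-Iw) := by
    have step2 : (∫ x in (0:ℝ)..L, Z2 (t, x) * pt Z2 (t, x))
        = ∫ x in (0:ℝ)..L, (-(hstar ^ 2 / 2 * Γstar) * (Z2 (t, x) * px (px (px (px Z1))) (t, x))
            + -(hstar * Γstar * s - D) * (Z2 (t, x) * px (px Z2) (t, x))) := by
      apply aeCongr
      intro x hx
      have h := heq2 x hx
      have h2 : pt Z2 (t, x) = -(hstar ^ 2 / 2 * Γstar) * px (px (px (px Z1))) (t, x)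
          + -(hstar * Γstar * s - D) * px (px Z2) (t, x) := by linarith
      rw [h2]; ring
    rw [step2, intervalIntegral.integral_add
        (iiPQ _ _ _ hz2.continuous cA4.continuous) (iiPQ _ _ _ hz2.continuous cW2.continuous),
      intervalIntegral.integral_const_mul, intervalIntegral.integral_const_mul, hJ3, hJ4]
  -- the time derivative of the energy
  have cF : Continuous (fun p : ℝ × ℝ => q * (px Z1 p) ^ 2 + hstar * (Z2 p) ^ 2) :=
    (continuous_const.mul (cA1.continuous.pow 2)).add
      (continuous_const.mul (hz2.continuous.pow 2))
  have cF' : Continuous (fun p : ℝ × ℝ =>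
      2 * q * (px Z1 p * pt (px Z1) p) + 2 * hstar * (Z2 p * pt Z2 p)) :=
    (continuous_const.mul (cA1.continuous.mul cTA1.continuous)).add
      (continuous_const.mul (hz2.continuous.mul cT2.continuous))
  have hder : HasDerivAt
      (fun τ => ∫ x in (0:ℝ)..L, (q * (px Z1 (τ, x)) ^ 2 + hstar * (Z2 (τ, x)) ^ 2))
      (∫ x in (0:ℝ)..L, (2 * q * (px Z1 (t, x) * pt (px Z1) (t, x))
        + 2 * hstar * (Z2 (t, x) * pt Z2 (t, x)))) t := by
    obtain ⟨C, hC⟩ := (isCompact_Icc (a := t - 1) (b := t + 1)).prod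
      (isCompact_uIcc (a := (0:ℝ)) (b := L)) |>.exists_bound_of_continuousOn cF'.continuousOn
    have key := intervalIntegral.hasDerivAt_integral_of_dominated_loc_of_deriv_le
      (F := fun τ x => q * (px Z1 (τ, x)) ^ 2 + hstar * (Z2 (τ, x)) ^ 2)
      (F' := fun τ x => 2 * q * (px Z1 (τ, x) * pt (px Z1) (τ, x))
        + 2 * hstar * (Z2 (τ, x) * pt Z2 (τ, x)))
      (x₀ := t) (a := 0) (b := L) (μ := volume) (bound := fun _ => C) (s := Metric.ball t 1) (Metric.ball_mem_nhds t one_pos)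
      (Filter.Eventually.of_forall fun τ => ((contSlice _ cF τ).aestronglyMeasurable))
      ((contSlice _ cF t).intervalIntegrable 0 L)
      ((contSlice _ cF' t).aestronglyMeasurable)
      (Filter.Eventually.of_forall ?_)
      (intervalIntegrable_const)
      (Filter.Eventually.of_forall ?_)
    · exact key.2
    · -- bound
      intro x hx τ hτ
      refine hC (τ, x) ⟨?_, ?_⟩
      · have h1 : |τ - t| < 1 := by simpa [Real.dist_eq] using hτ
        have h2 := abs_lt.1 h1
        exact ⟨by linarith [h2.1], by linarith [h2.2]⟩
      · exact Set.Ioc_subset_Icc_self hx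
    · -- differentiability in τ
      intro x hx τ hτ
      have h1 : HasDerivAt (fun τ => px Z1 (τ, x)) (pt (px Z1) (τ, x)) τ :=
        hasDerivAt_pt (cA1.differentiable (by simp)) τ x
      have h2 : HasDerivAt (fun τ => Z2 (τ, x)) (pt Z2 (τ, x)) τ :=
        hasDerivAt_pt (hz2.differentiable (by simp)) τ x
      have h3 := ((h1.pow 2).const_mul q).add ((h2.pow 2).const_mul hstar)
      refine h3.congr_deriv ?_
      push_cast
      ring
  -- split of the energy functional
  have hsplit : ∀ τ : ℝ, q * (∫ x in (0:ℝ)..L, (px Z1 (τ, x)) ^ 2)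
      + hstar * (∫ x in (0:ℝ)..L, (Z2 (τ, x)) ^ 2)
      = ∫ x in (0:ℝ)..L, (q * (px Z1 (τ, x)) ^ 2 + hstar * (Z2 (τ, x)) ^ 2) := by
    intro τ
    rw [intervalIntegral.integral_add (f := fun x => q * (px Z1 (τ, x)) ^ 2)
        (g := fun x => hstar * (Z2 (τ, x)) ^ 2)
        ((continuous_const.mul ((contSlice _ cA1.continuous τ).pow 2)).intervalIntegrable 0 L)
        ((continuous_const.mul ((contSlice _ hz2.continuous τ).pow 2)).intervalIntegrable 0 L),
      intervalIntegral.integral_const_mul, intervalIntegral.integral_const_mul]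
  refine ⟨∫ x in (0:ℝ)..L, (2 * q * (px Z1 (t, x) * pt (px Z1) (t, x))
      + 2 * hstar * (Z2 (t, x) * pt Z2 (t, x))), ?_, ?_⟩
  · have hfe : (fun τ => q * (∫ x in (0:ℝ)..L, (px Z1 (τ, x)) ^ 2)
        + hstar * (∫ x in (0:ℝ)..L, (Z2 (τ, x)) ^ 2))
        = fun τ => ∫ x in (0:ℝ)..L, (q * (px Z1 (τ, x)) ^ 2 + hstar * (Z2 (τ, x)) ^ 2) :=
      funext hsplit
    rw [hfe]
    exact hder
  · -- the dissipation identity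
    have hVeq : (∫ x in (0:ℝ)..L, (2 * q * (px Z1 (t, x) * pt (px Z1) (t, x))
        + 2 * hstar * (Z2 (t, x) * pt Z2 (t, x))))
        = 2 * q * (∫ x in (0:ℝ)..L, px Z1 (t, x) * pt (px Z1) (t, x))
          + 2 * hstar * (∫ x in (0:ℝ)..L, Z2 (t, x) * pt Z2 (t, x)) := by
      rw [intervalIntegral.integral_add
          (iiPQ _ _ _ cA1.continuous cTA1.continuous) (iiPQ _ _ _ hz2.continuous cT2.continuous),
        intervalIntegral.integral_const_mul, intervalIntegral.integral_const_mul]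
    have e1 : (∫ x in (0:ℝ)..L, (px (px (px Z1)) (t, x)) ^ 2) = I3 := by
      rw [hI3]; exact intervalIntegral.integral_congr fun x _ => by ring
    have e2 : (∫ x in (0:ℝ)..L, (px Z2 (t, x)) ^ 2) = Iw := by
      rw [hIw]; exact intervalIntegral.integral_congr fun x _ => by ring
    rw [hVeq, hK1, hK2, e1, e2]
    ring

/-- Dissipation identity for the Lyapunov functional
`V(t) = q‖∂ₓz₁(t)‖²_{L²} + h*‖z₂(t)‖²_{L²}` along smooth solutions of the
linearization of the thin film surfactant system at the flat state `(h*, Γ*)`: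
`(1/2)V′(t) = −(qh*³/3)∫(∂ₓ³z₁)² + ((h*³Γ* − qh*²s)/2)∫∂ₓ³z₁·∂ₓz₂
 − h*(𝒟 − h*Γ*s)∫(∂ₓz₂)²`. -/

theorem stmt_13 (L T hstar Γstar D s q : ℝ)
    (hL : 0 < L) (hT : 0 < T) (hh : 0 < hstar) (hΓ : 0 ≤ Γstar)
    (hD : 0 < D) (hq : 0 < q)
    (z1 z2 : ℝ → ℝ → ℝ)
    (hz1 : ContDiff ℝ (⊤ : ℕ∞) (fun p : ℝ × ℝ => z1 p.1 p.2))
    (hz2 : ContDiff ℝ (⊤ : ℕ∞) (fun p : ℝ × ℝ => z2 p.1 p.2))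
    (heq1 : ∀ t ∈ Ioo 0 T, ∀ x ∈ Ioo 0 L,
      deriv (fun τ => z1 τ x) t + hstar ^ 3 / 3 * iteratedDeriv 4 (z1 t) x
        + hstar ^ 2 / 2 * s * iteratedDeriv 2 (z2 t) x = 0)
    (heq2 : ∀ t ∈ Ioo 0 T, ∀ x ∈ Ioo 0 L,
      deriv (fun τ => z2 τ x) t
        + hstar ^ 2 / 2 * Γstar * iteratedDeriv 4 (z1 t) x
        + (hstar * Γstar * s - D) * iteratedDeriv 2 (z2 t) x = 0)
    (hbc : ∀ t ∈ Icc 0 T, ∀ x ∈ ({0, L} : Set ℝ),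
      deriv (z1 t) x = 0 ∧ iteratedDeriv 3 (z1 t) x = 0 ∧ deriv (z2 t) x = 0) :
    ∀ t ∈ Ioo 0 T, ∃ V' : ℝ,
      HasDerivAt (fun τ => q * (∫ x in (0:ℝ)..L, (deriv (z1 τ) x) ^ 2)
          + hstar * (∫ x in (0:ℝ)..L, (z2 τ x) ^ 2)) V' t ∧
      1 / 2 * V' =
        -(q * hstar ^ 3 / 3) * (∫ x in (0:ℝ)..L, (iteratedDeriv 3 (z1 t) x) ^ 2)
          + (hstar ^ 3 * Γstar - q * hstar ^ 2 * s) / 2 *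
              (∫ x in (0:ℝ)..L, iteratedDeriv 3 (z1 t) x * deriv (z2 t) x)
          - hstar * (D - hstar * Γstar * s) *
              (∫ x in (0:ℝ)..L, (deriv (z2 t) x) ^ 2) := by
  intro t ht
  have hD1 : Differentiable ℝ (fun p : ℝ × ℝ => z1 p.1 p.2) := hz1.differentiable (by simp)
  have hD2 : Differentiable ℝ (fun p : ℝ × ℝ => z2 p.1 p.2) := hz2.differentiable (by simp)
  -- bridging lemmas between curried and uncurried derivatives
  have bpt1 : ∀ a b : ℝ, deriv (fun τ => z1 τ b) a
      = pt (fun p : ℝ × ℝ => z1 p.1 p.2) (a, b) := fun a b => (hasDerivAt_pt hD1 a b).deriv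
  have bpt2 : ∀ a b : ℝ, deriv (fun τ => z2 τ b) a
      = pt (fun p : ℝ × ℝ => z2 p.1 p.2) (a, b) := fun a b => (hasDerivAt_pt hD2 a b).deriv
  have bder1 : ∀ a b : ℝ, deriv (z1 a) b
      = px (fun p : ℝ × ℝ => z1 p.1 p.2) (a, b) := fun a b => deriv_eq_px hD1 a b
  have bder2 : ∀ a b : ℝ, deriv (z2 a) b
      = px (fun p : ℝ × ℝ => z2 p.1 p.2) (a, b) := fun a b => deriv_eq_px hD2 a b
  have bit1 : ∀ (n : ℕ) (a b : ℝ), iteratedDeriv n (z1 a) b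
      = (px^[n] (fun p : ℝ × ℝ => z1 p.1 p.2)) (a, b) := fun n a b => iteratedDeriv_eq_px hz1 n a b
  have bit2 : ∀ (n : ℕ) (a b : ℝ), iteratedDeriv n (z2 a) b
      = (px^[n] (fun p : ℝ × ℝ => z2 p.1 p.2)) (a, b) := fun n a b => iteratedDeriv_eq_px hz2 n a b
  obtain ⟨V', h1, h2⟩ := aux_main L T hstar Γstar D s q t hL ht _ _ hz1 hz2
    (fun x hx => by
      have h := heq1 t ht x hx
      rw [bpt1 t x, bit1 4 t x, iter4, bit2 2 t x, iter2] at h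
      exact h)
    (fun x hx => by
      have h := heq2 t ht x hx
      rw [bpt2 t x, bit1 4 t x, iter4, bit2 2 t x, iter2] at h
      exact h)
    (fun x hx => by
      obtain ⟨hb1, hb2, hb3⟩ := hbc t ⟨ht.1.le, ht.2.le⟩ x hx
      refine ⟨?_, ?_, ?_⟩
      · rw [← bder1 t x]; exact hb1
      · rw [← iter3 px (fun p : ℝ × ℝ => z1 p.1 p.2), ← bit1 3 t x]; exact hb2
      · rw [← bder2 t x]; exact hb3)
  refine ⟨V', ?_, ?_⟩
  · have hfe : (fun τ => q * (∫ x in (0:ℝ)..L, (deriv (z1 τ) x) ^ 2)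
        + hstar * (∫ x in (0:ℝ)..L, (z2 τ x) ^ 2))
        = fun τ => q * (∫ x in (0:ℝ)..L, (px (fun p : ℝ × ℝ => z1 p.1 p.2) (τ, x)) ^ 2)
          + hstar * (∫ x in (0:ℝ)..L, ((fun p : ℝ × ℝ => z2 p.1 p.2) (τ, x)) ^ 2) := by
      funext τ
      have hg : (∫ x in (0:ℝ)..L, (deriv (z1 τ) x) ^ 2)
          = ∫ x in (0:ℝ)..L, (px (fun p : ℝ × ℝ => z1 p.1 p.2) (τ, x)) ^ 2 :=
        intervalIntegral.integral_congr fun x _ => by rw [bder1 τ x]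
      rw [hg]
    rw [hfe]
    exact h1
  · have g1 : (∫ x in (0:ℝ)..L, (iteratedDeriv 3 (z1 t) x) ^ 2)
        = ∫ x in (0:ℝ)..L,
          (px (px (px (fun p : ℝ × ℝ => z1 p.1 p.2))) (t, x)) ^ 2 :=
      intervalIntegral.integral_congr fun x _ => by rw [bit1 3 t x, iter3]
    have g2 : (∫ x in (0:ℝ)..L, iteratedDeriv 3 (z1 t) x * deriv (z2 t) x)
        = ∫ x in (0:ℝ)..L, px (px (px (fun p : ℝ × ℝ => z1 p.1 p.2))) (t, x)
            * px (fun p : ℝ × ℝ => z2 p.1 p.2) (t, x) :=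
      intervalIntegral.integral_congr fun x _ => by rw [bit1 3 t x, iter3, bder2 t x]
    have g3 : (∫ x in (0:ℝ)..L, (deriv (z2 t) x) ^ 2)
        = ∫ x in (0:ℝ)..L, (px (fun p : ℝ × ℝ => z2 p.1 p.2) (t, x)) ^ 2 :=
      intervalIntegral.integral_congr fun x _ => by rw [bder2 t x]
    rw [g1, g2, g3]
    exact h2
end
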